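/- arXiv:2002.11364 — 7 statements merged into one kernel-verified Lean document; each statement's English description precedes it below -/
import Mathlib

section
/- Let f : ℝ^d → ℝ be convex and differentiable with L-Lipschitz continuous gradient (L > 0), with a minimizer x*. Let ω ≥ 0 and let C_0, C_1, … be independent ω-compression operators on a probability space. Let the CGD iterates be x^{k+1} = x^k − η C_k(∇f(x^k)) with step size η = 1/((1+ω)L). Then for every k ≥ 1, E[f(x^k)] − f(x*) ≤ (1+ω) L ‖x^0 − x*‖² / k. In particular, an ε-solution with E[f(x^k)] − f(x*) ≤ ε is reached after at most (1+ω) L ‖x^0 − x*‖² / ε iterations. -/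
/-!
Write `g = ∇f(y)` and let `u` be an unbiased compression of `g`. Since `E‖u‖² ≤ (1 + ω)‖g‖²`,
the descent lemma gives `E f(y - η u) ≤ f(y) - (η/2)‖g‖²` for `η = 1/((1 + ω)L)`, while convexity
gives `E‖y - η u - x*‖² ≤ ‖y - x*‖² - 2η(f(y) - f(x*)) + η²(1 + ω)‖g‖²`. Adding `2η(1 + ω)` times
the first bound to the second cancels the gradient terms: the Lyapunov function
`V(y) = ‖y - x*‖² + 2η(1 + ω)(f(y) - f(x*))` drops in expectation by `2η(f(y) - f(x*))` per step.
The iterate `x^k` is a function of the first `k` compressor samples, which carry the product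
measure, so Fubini turns these one-step bounds into `E V(x^{n+1}) ≤ E V(x^n) - 2η(E f(x^n) - f(x*))`
and `E f(x^{n+1}) ≤ E f(x^n)`. Telescoping yields `2ηk (E f(x^k) - f(x*)) ≤ V(x^0) ≤ 2‖x^0 - x*‖²`.
-/

open MeasureTheory

local notation "⟪" x ", " y "⟫" => inner ℝ x y

theorem Antitone.mul_natCast_mul_add_le {V δ : ℕ → ℝ} {c : ℝ} (hδ : Antitone δ) (hc : 0 ≤ c)
    (hV : ∀ n, V (n + 1) ≤ V n - c * δ n) (n : ℕ) : c * n * δ n + V n ≤ V 0 := by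
  induction n with
  | zero => simp
  | succ n ih =>
    have hmono := mul_le_mul_of_nonneg_left (hδ n.le_succ) (by positivity : 0 ≤ c * (n + 1))
    push_cast
    linarith [hV n]

theorem memLp_two_of_integrable_norm_sub_sq {Ω E : Type*} [MeasurableSpace Ω] {μ : Measure Ω}
    [IsFiniteMeasure μ] [NormedAddCommGroup E] {u : Ω → E} (hu : AEStronglyMeasurable u μ) {a : E}
    (h : Integrable (fun ω => ‖u ω - a‖ ^ 2) μ) : MemLp u 2 μ := by
  simpa using ((memLp_two_iff_integrable_sq_norm (hu.sub aestronglyMeasurable_const)).2 h).add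
    (memLp_const a)

theorem integrable_and_integral_le_of_integral_snoc_le {Ω : Type*} [MeasureSpace Ω]
    [SigmaFinite (volume : Measure Ω)] {n : ℕ} {φ : (Fin (n + 1) → Ω) → ℝ} {ψ : (Fin n → Ω) → ℝ}
    (hφm : AEStronglyMeasurable φ) (hφ : 0 ≤ φ) (hψ : Integrable ψ)
    (hint : ∀ w, Integrable fun ω => φ (Fin.snoc w ω))
    (hle : ∀ w, ∫ ω, φ (Fin.snoc w ω) ≤ ψ w) :
    Integrable φ ∧ ∫ w, φ w ≤ ∫ w, ψ w := by
  let e := MeasurableEquiv.piFinSuccAbove (fun _ : Fin (n + 1) => Ω) (Fin.last n)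
  have he : MeasurePreserving e.symm (volume.prod volume) volume :=
    (volume_preserving_piFinSuccAbove (fun _ => Ω) (Fin.last n)).symm e
  have hsnoc (p : Ω × (Fin n → Ω)) : e.symm p = Fin.snoc p.2 p.1 := by
    simp [e, MeasurableEquiv.piFinSuccAbove_symm_apply]
    rfl
  have hm : AEStronglyMeasurable (φ ∘ e.symm) (volume.prod volume) :=
    hφm.comp_measurePreserving he
  have hprod : Integrable (φ ∘ e.symm) (volume.prod volume) := by
    refine (integrable_prod_iff' hm).2 ⟨ae_of_all _ fun w => by simpa [hsnoc] using hint w,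
      hψ.mono' (hm.comp_measurePreserving Measure.measurePreserving_swap).norm.integral_prod_right'
        (ae_of_all _ fun w => ?_)⟩
    simp only [Function.comp_apply, hsnoc, Real.norm_of_nonneg (hφ _)]
    rw [Real.norm_of_nonneg (integral_nonneg fun ω => hφ (Fin.snoc w ω))]
    exact hle w
  refine ⟨(he.integrable_comp_emb e.symm.measurableEmbedding).1 hprod, ?_⟩
  rw [← he.integral_comp e.symm.measurableEmbedding]
  refine (integral_prod_symm (φ ∘ e.symm) hprod).trans_le ?_
  exact integral_mono hprod.integral_prod_right hψ fun w => by simpa [hsnoc] using hle w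

section

variable {F : Type*} [NormedAddCommGroup F] {f : F → ℝ} {L η om : ℝ}

noncomputable def cgdLyapunov (f : F → ℝ) (xstar : F) (η om : ℝ) (y : F) : ℝ :=
  ‖y - xstar‖ ^ 2 + 2 * η * (1 + om) * (f y - f xstar)

theorem cgdLyapunov_nonneg (hη : 0 ≤ η) (hom : 0 ≤ om) {xstar : F} (hmin : ∀ x, f xstar ≤ f x)
    (y : F) : 0 ≤ cgdLyapunov f xstar η om y := by
  have := sub_nonneg.2 (hmin y)
  unfold cgdLyapunov
  positivity

variable [InnerProductSpace ℝ F] [CompleteSpace F]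

theorem hasDerivAt_comp_add_smul (hf : Differentiable ℝ f) (x v : F) (t : ℝ) :
    HasDerivAt (fun s : ℝ => f (x + s • v)) ⟪gradient f (x + t • v), v⟫ t := by
  have hline : HasDerivAt (fun s : ℝ => x + s • v) v t := by
    simpa using ((hasDerivAt_id t).smul_const v).const_add x
  have h := (hf (x + t • v)).hasFDerivAt.comp_hasDerivAt t hline
  rw [← inner_gradient_left] at h
  exact h

theorem ConvexOn.add_inner_gradient_le (hconv : ConvexOn ℝ Set.univ f)
    (hf : Differentiable ℝ f) (x y : F) : f x + ⟪gradient f x, y - x⟫ ≤ f y := by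
  have hline : ConvexOn ℝ Set.univ fun s : ℝ => f (x + s • (y - x)) := by
    simpa [Function.comp_def, AffineMap.lineMap_apply_module', add_comm x]
      using hconv.comp_affineMap (AffineMap.lineMap x y)
  have hderiv := hasDerivAt_comp_add_smul hf x (y - x) 0
  rw [zero_smul, add_zero] at hderiv
  have hslope := hline.le_slope_of_hasDerivAt (Set.mem_univ 0) (Set.mem_univ 1) one_pos hderiv
  simp only [slope_def_field, zero_smul, add_zero, one_smul, add_sub_cancel, sub_zero,
    div_one] at hslope
  linarith

theorem le_add_inner_gradient_add_mul_norm_sq (hf : Differentiable ℝ f)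
    (hlip : ∀ x y, ‖gradient f x - gradient f y‖ ≤ L * ‖x - y‖) (x y : F) :
    f y ≤ f x + ⟪gradient f x, y - x⟫ + L / 2 * ‖y - x‖ ^ 2 := by
  set v := y - x
  have hquad (t : ℝ) : HasDerivAt (fun t => f x + t * ⟪gradient f x, v⟫ + L / 2 * ‖v‖ ^ 2 * t ^ 2)
      (⟪gradient f x, v⟫ + L * ‖v‖ ^ 2 * t) t := by
    refine ((((hasDerivAt_id t).mul_const ⟪gradient f x, v⟫).const_add (f x)).add
      ((hasDerivAt_pow 2 t).const_mul (L / 2 * ‖v‖ ^ 2))).congr_deriv ?_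
    norm_num
    ring
  have hslope (t : ℝ) (ht : t ∈ Set.Ico (0 : ℝ) 1) :
      ⟪gradient f (x + t • v), v⟫ ≤ ⟪gradient f x, v⟫ + L * ‖v‖ ^ 2 * t := by
    have h := real_inner_le_norm (gradient f (x + t • v) - gradient f x) v
    have hL := hlip (x + t • v) x
    rw [inner_sub_left] at h
    rw [add_sub_cancel_left, norm_smul, Real.norm_of_nonneg ht.1] at hL
    linarith [mul_le_mul_of_nonneg_right hL (norm_nonneg v)]
  have key := image_le_of_deriv_right_le_deriv_boundary
    (fun t _ => (hasDerivAt_comp_add_smul hf x v t).continuousAt.continuousWithinAt)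
    (fun t _ => (hasDerivAt_comp_add_smul hf x v t).hasDerivWithinAt) (by simp)
    (fun t _ => (hquad t).continuousAt.continuousWithinAt)
    (fun t _ => (hquad t).hasDerivWithinAt) hslope (Set.right_mem_Icc.2 zero_le_one)
  simpa [v] using key

theorem IsLocalMin.gradient_eq_zero {a : F} (h : IsLocalMin f a) : gradient f a = 0 := by
  simp [gradient, h.fderiv_eq_zero]

theorem cgdLyapunov_le (hf : Differentiable ℝ f)
    (hlip : ∀ x y, ‖gradient f x - gradient f y‖ ≤ L * ‖x - y‖) (hL : 0 ≤ L) (hom : 0 ≤ om)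
    (hη : (1 + om) * L * η = 1) {xstar : F} (hmin : ∀ x, f xstar ≤ f x) (y : F) :
    cgdLyapunov f xstar η om y ≤ 2 * ‖y - xstar‖ ^ 2 := by
  have hη0 : 0 < η := pos_of_mul_pos_right (hη ▸ one_pos) (by positivity)
  have h := le_add_inner_gradient_add_mul_norm_sq hf hlip xstar y
  have hcrit : IsLocalMin f xstar := Filter.Eventually.of_forall hmin
  rw [hcrit.gradient_eq_zero, inner_zero_left, add_zero] at h
  have h' := mul_le_mul_of_nonneg_left (sub_le_iff_le_add'.2 h)
    (by positivity : 0 ≤ 2 * η * (1 + om))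
  unfold cgdLyapunov
  linear_combination h' + ‖y - xstar‖ ^ 2 * hη

noncomputable def cgdStep (f : F → ℝ) (η : ℝ) (c : F → F) (y : F) : F := y - η • c (gradient f y)

theorem le_comp_cgdStep (hconv : ConvexOn ℝ Set.univ f) (hf : Differentiable ℝ f)
    (c : F → F) (y : F) :
    f y - η * ⟪gradient f y, c (gradient f y)⟫ ≤ f (cgdStep f η c y) := by
  have h := hconv.add_inner_gradient_le hf y (cgdStep f η c y)
  rwa [cgdStep, sub_sub_cancel_left, inner_neg_right, real_inner_smul_right, ← sub_eq_add_neg]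
    at h

theorem comp_cgdStep_le (hf : Differentiable ℝ f)
    (hlip : ∀ x y, ‖gradient f x - gradient f y‖ ≤ L * ‖x - y‖) (c : F → F) (y : F) :
    f (cgdStep f η c y)
      ≤ f y - η * ⟪gradient f y, c (gradient f y)⟫ + L / 2 * η ^ 2 * ‖c (gradient f y)‖ ^ 2 := by
  have h := le_add_inner_gradient_add_mul_norm_sq hf hlip y (cgdStep f η c y)
  unfold cgdStep at h ⊢
  rw [sub_sub_cancel_left, inner_neg_right, real_inner_smul_right, norm_neg, norm_smul,
    mul_pow, Real.norm_eq_abs, sq_abs] at h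
  linarith

theorem integral_norm_sub_sq {Ω : Type*} [MeasurableSpace Ω] {μ : Measure Ω}
    [IsProbabilityMeasure μ] {u : Ω → F} (hu : MemLp u 2 μ) (a : F) :
    ∫ ω, ‖a - u ω‖ ^ 2 ∂μ = ‖a‖ ^ 2 - 2 * ⟪a, ∫ ω, u ω ∂μ⟫ + ∫ ω, ‖u ω‖ ^ 2 ∂μ := by
  have hu1 : Integrable u μ := hu.integrable one_le_two
  have hinner : Integrable (fun ω => 2 * ⟪a, u ω⟫) μ := (hu1.const_inner a).const_mul 2
  have hlin : Integrable (fun ω => ‖a‖ ^ 2 - 2 * ⟪a, u ω⟫) μ := (integrable_const _).sub hinner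
  simp_rw [norm_sub_sq_real]
  rw [integral_add hlin ((memLp_two_iff_integrable_sq_norm hu.1).1 hu),
    integral_sub (integrable_const _) hinner, integral_const_mul, integral_inner hu1]
  simp

end

structure IsCompressionOperator {Ω F : Type*} [MeasurableSpace Ω] [NormedAddCommGroup F]
    [NormedSpace ℝ F] [MeasurableSpace F]
    (C : Ω → F → F) (om : ℝ) (μ : Measure Ω) : Prop where
  measurable_uncurry : Measurable fun p : Ω × F => C p.1 p.2
  memLp : ∀ v, MemLp (fun ω => C ω v) 2 μ
  integral_eq : ∀ v, ∫ ω, C ω v ∂μ = v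
  integral_norm_sub_sq_le : ∀ v, ∫ ω, ‖C ω v - v‖ ^ 2 ∂μ ≤ om * ‖v‖ ^ 2

namespace IsCompressionOperator

variable {F : Type*} [NormedAddCommGroup F] [InnerProductSpace ℝ F] [CompleteSpace F]
  [MeasurableSpace F] {f : F → ℝ} {L η om : ℝ}
  {Ω : Type*} [MeasurableSpace Ω] {μ : Measure Ω} [IsProbabilityMeasure μ] {C : Ω → F → F}

theorem integral_norm_sq_le (hC : IsCompressionOperator C om μ) (v : F) :
    ∫ ω, ‖C ω v‖ ^ 2 ∂μ ≤ (1 + om) * ‖v‖ ^ 2 := by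
  have h := integral_norm_sub_sq (hC.memLp v) v
  simp_rw [hC.integral_eq, real_inner_self_eq_norm_sq, norm_sub_rev v] at h
  linarith [hC.integral_norm_sub_sq_le v]

theorem memLp_cgdStep (hC : IsCompressionOperator C om μ) (y : F) :
    MemLp (fun ω => cgdStep f η (C ω) y) 2 μ :=
  (memLp_const y).sub ((hC.memLp _).const_smul η)

theorem integrable_norm_cgdStep_sub_sq (hC : IsCompressionOperator C om μ) (y z : F) :
    Integrable (fun ω => ‖cgdStep f η (C ω) y - z‖ ^ 2) μ :=
  have h := (hC.memLp_cgdStep y).sub (memLp_const z)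
  (memLp_two_iff_integrable_sq_norm h.1).1 h

theorem integrable_comp_cgdStep (hC : IsCompressionOperator C om μ)
    (hconv : ConvexOn ℝ Set.univ f) (hf : Differentiable ℝ f)
    (hlip : ∀ x y, ‖gradient f x - gradient f y‖ ≤ L * ‖x - y‖) (y : F) :
    Integrable (fun ω => f (cgdStep f η (C ω) y)) μ := by
  have hu := hC.memLp (gradient f y)
  have hinner := ((hu.integrable one_le_two).const_inner (gradient f y)).const_mul η
  refine integrable_of_le_of_le (hf.continuous.comp_aestronglyMeasurable (hC.memLp_cgdStep y).1)
    (ae_of_all _ fun ω => le_comp_cgdStep hconv hf (C ω) y)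
    (ae_of_all _ fun ω => comp_cgdStep_le hf hlip (C ω) y)
    ((integrable_const _).sub hinner) (((integrable_const _).sub hinner).add ?_)
  exact ((memLp_two_iff_integrable_sq_norm hu.1).1 hu).const_mul _

theorem integral_comp_cgdStep_le (hC : IsCompressionOperator C om μ)
    (hconv : ConvexOn ℝ Set.univ f) (hf : Differentiable ℝ f)
    (hlip : ∀ x y, ‖gradient f x - gradient f y‖ ≤ L * ‖x - y‖) (hL : 0 ≤ L) (y : F) :
    ∫ ω, f (cgdStep f η (C ω) y) ∂μ
      ≤ f y - η * (1 - L * η * (1 + om) / 2) * ‖gradient f y‖ ^ 2 := by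
  set g := gradient f y
  have hu := hC.memLp g
  have hinner := ((hu.integrable one_le_two).const_inner g).const_mul η
  have hlin : Integrable (fun ω => f y - η * ⟪g, C ω g⟫) μ := (integrable_const _).sub hinner
  have hsq := ((memLp_two_iff_integrable_sq_norm hu.1).1 hu).const_mul (L / 2 * η ^ 2)
  calc ∫ ω, f (cgdStep f η (C ω) y) ∂μ
      ≤ ∫ ω, (f y - η * ⟪g, C ω g⟫ + L / 2 * η ^ 2 * ‖C ω g‖ ^ 2) ∂μ :=
        integral_mono (hC.integrable_comp_cgdStep hconv hf hlip y)
          (hlin.add hsq) fun ω => comp_cgdStep_le hf hlip (C ω) y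
    _ = f y - η * ‖g‖ ^ 2 + L / 2 * η ^ 2 * ∫ ω, ‖C ω g‖ ^ 2 ∂μ := by
        rw [integral_add hlin hsq, integral_sub (integrable_const _) hinner, integral_const_mul,
          integral_const_mul, integral_inner (hu.integrable one_le_two), hC.integral_eq,
          real_inner_self_eq_norm_sq]
        simp
    _ ≤ f y - η * ‖g‖ ^ 2 + L / 2 * η ^ 2 * ((1 + om) * ‖g‖ ^ 2) := by
        gcongr
        exact hC.integral_norm_sq_le g
    _ = f y - η * (1 - L * η * (1 + om) / 2) * ‖g‖ ^ 2 := by ring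

theorem integral_norm_cgdStep_sub_sq_le (hC : IsCompressionOperator C om μ)
    (hconv : ConvexOn ℝ Set.univ f) (hf : Differentiable ℝ f) (hη : 0 ≤ η) (y z : F) :
    ∫ ω, ‖cgdStep f η (C ω) y - z‖ ^ 2 ∂μ
      ≤ ‖y - z‖ ^ 2 - 2 * η * (f y - f z) + η ^ 2 * (1 + om) * ‖gradient f y‖ ^ 2 := by
  set g := gradient f y
  have hexp := integral_norm_sub_sq (u := fun ω => η • C ω g) ((hC.memLp g).const_smul η) (y - z)
  simp_rw [integral_smul, hC.integral_eq, real_inner_smul_right, norm_smul, mul_pow,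
    Real.norm_eq_abs, sq_abs, integral_const_mul] at hexp
  have hconvex := hconv.add_inner_gradient_le hf y z
  rw [← neg_sub y z, inner_neg_right, real_inner_comm] at hconvex
  have hcross := mul_le_mul_of_nonneg_left (by linarith : f y - f z ≤ ⟪y - z, g⟫)
    (by positivity : 0 ≤ 2 * η)
  have hsecond := mul_le_mul_of_nonneg_left (hC.integral_norm_sq_le g) (sq_nonneg η)
  simp_rw [cgdStep, sub_right_comm y _ z]
  linarith

theorem integral_comp_cgdStep_sub_le (hC : IsCompressionOperator C om μ)
    (hconv : ConvexOn ℝ Set.univ f) (hf : Differentiable ℝ f)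
    (hlip : ∀ x y, ‖gradient f x - gradient f y‖ ≤ L * ‖x - y‖) (hL : 0 ≤ L) (hom : 0 ≤ om)
    (hη : (1 + om) * L * η = 1) (xstar y : F) :
    ∫ ω, (f (cgdStep f η (C ω) y) - f xstar) ∂μ ≤ f y - f xstar := by
  have hη0 : 0 < η := pos_of_mul_pos_right (hη ▸ one_pos) (by positivity)
  have hcoeff : η * (1 - L * η * (1 + om) / 2) = η / 2 := by linear_combination -η / 2 * hη
  have h := hC.integral_comp_cgdStep_le (η := η) hconv hf hlip hL y
  rw [hcoeff] at h
  rw [integral_sub (hC.integrable_comp_cgdStep hconv hf hlip y) (integrable_const _),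
    integral_const]
  simp only [probReal_univ, one_smul]
  linarith [(by positivity : 0 ≤ η / 2 * ‖gradient f y‖ ^ 2)]

theorem integrable_cgdLyapunov_cgdStep (hC : IsCompressionOperator C om μ)
    (hconv : ConvexOn ℝ Set.univ f) (hf : Differentiable ℝ f)
    (hlip : ∀ x y, ‖gradient f x - gradient f y‖ ≤ L * ‖x - y‖) (xstar y : F) :
    Integrable (fun ω => cgdLyapunov f xstar η om (cgdStep f η (C ω) y)) μ :=
  (hC.integrable_norm_cgdStep_sub_sq y xstar).add
    (((hC.integrable_comp_cgdStep hconv hf hlip y).sub (integrable_const _)).const_mul _)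

theorem integral_cgdLyapunov_cgdStep_le (hC : IsCompressionOperator C om μ)
    (hconv : ConvexOn ℝ Set.univ f) (hf : Differentiable ℝ f)
    (hlip : ∀ x y, ‖gradient f x - gradient f y‖ ≤ L * ‖x - y‖) (hL : 0 ≤ L) (hom : 0 ≤ om)
    (hη : (1 + om) * L * η = 1) (xstar y : F) :
    ∫ ω, cgdLyapunov f xstar η om (cgdStep f η (C ω) y) ∂μ
      ≤ cgdLyapunov f xstar η om y - 2 * η * (f y - f xstar) := by
  have hη0 : 0 < η := pos_of_mul_pos_right (hη ▸ one_pos) (by positivity)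
  have hvalue := hC.integrable_comp_cgdStep (η := η) hconv hf hlip y
  have hgap : Integrable (fun ω => f (cgdStep f η (C ω) y) - f xstar) μ :=
    hvalue.sub (integrable_const _)
  have hdist_le := hC.integral_norm_cgdStep_sub_sq_le hconv hf hη0.le y xstar
  have hvalue_le := mul_le_mul_of_nonneg_left
    (hC.integral_comp_cgdStep_le (η := η) hconv hf hlip hL y)
    (by positivity : 0 ≤ 2 * η * (1 + om))
  unfold cgdLyapunov
  rw [integral_add (hC.integrable_norm_cgdStep_sub_sq y xstar) (hgap.const_mul _),
    integral_const_mul, integral_sub hvalue (integrable_const _), integral_const]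
  simp only [probReal_univ, one_smul]
  -- The `η²` terms cancel because `(1 + om) L η = 1`.
  linear_combination hdist_le + hvalue_le + η ^ 2 * (1 + om) * ‖gradient f y‖ ^ 2 * hη

end IsCompressionOperator

section Iterates

variable {F : Type*} [NormedAddCommGroup F] [InnerProductSpace ℝ F] [CompleteSpace F]
  [MeasurableSpace F] [BorelSpace F] {f : F → ℝ} {L η om : ℝ}
  {Ω : Type*} [MeasureSpace Ω] {C : ℕ → Ω → F → F} {x : (k : ℕ) → (Fin k → Ω) → F}

theorem measurable_cgd_iterate [SecondCountableTopology F]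
    (hC : ∀ k, Measurable fun p : Ω × F => C k p.1 p.2)
    (hgrad : Continuous (gradient f)) {x0 : F} (hx0 : ∀ w, x 0 w = x0)
    (hx : ∀ k w, x (k + 1) w = cgdStep f η (C k (w (Fin.last k))) (x k fun i => w i.castSucc)) :
    ∀ n, Measurable (x n)
  | 0 => by rw [funext hx0]; exact measurable_const
  | n + 1 => by
    have hinit : Measurable fun w : Fin (n + 1) → Ω => x n fun i => w i.castSucc :=
      (measurable_cgd_iterate hC hgrad hx0 hx n).comp
        (measurable_pi_lambda _ fun i => measurable_pi_apply _)
    rw [funext (hx n)]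
    exact hinit.sub (((hC n).comp ((measurable_pi_apply _).prodMk
      (hgrad.measurable.comp hinit))).const_smul η)

variable [IsProbabilityMeasure (volume : Measure Ω)] {xstar : F}

theorem integral_cgd_iterate_succ_le (hC : ∀ k, IsCompressionOperator (C k) om volume)
    (hconv : ConvexOn ℝ Set.univ f) (hf : Differentiable ℝ f)
    (hlip : ∀ x y, ‖gradient f x - gradient f y‖ ≤ L * ‖x - y‖) (hL : 0 ≤ L) (hom : 0 ≤ om)
    (hη : (1 + om) * L * η = 1) (hmin : ∀ x, f xstar ≤ f x)
    (hx : ∀ k w, x (k + 1) w = cgdStep f η (C k (w (Fin.last k))) (x k fun i => w i.castSucc))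
    (hxm : ∀ n, Measurable (x n)) (n : ℕ)
    (hV : Integrable fun w => cgdLyapunov f xstar η om (x n w))
    (hgap : Integrable fun w => f (x n w) - f xstar) :
    ((Integrable fun w => cgdLyapunov f xstar η om (x (n + 1) w))
      ∧ ∫ w, cgdLyapunov f xstar η om (x (n + 1) w)
        ≤ (∫ w, cgdLyapunov f xstar η om (x n w)) - 2 * η * ∫ w, (f (x n w) - f xstar))
    ∧ ((Integrable fun w => f (x (n + 1) w) - f xstar)
      ∧ ∫ w, (f (x (n + 1) w) - f xstar) ≤ ∫ w, (f (x n w) - f xstar)) := by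
  have hη0 : 0 < η := pos_of_mul_pos_right (hη ▸ one_pos) (by positivity)
  have hsnoc (w : Fin n → Ω) (ω : Ω) :
      x (n + 1) (Fin.snoc w ω) = cgdStep f η (C n ω) (x n w) := by
    rw [hx]; simp
  have hfc := hf.continuous
  have hVc : Continuous (cgdLyapunov f xstar η om) := by unfold cgdLyapunov; fun_prop
  constructor
  · have h := integrable_and_integral_le_of_integral_snoc_le
      (φ := fun w => cgdLyapunov f xstar η om (x (n + 1) w))
      (ψ := fun w => cgdLyapunov f xstar η om (x n w) - 2 * η * (f (x n w) - f xstar))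
      (hVc.measurable.comp (hxm _)).aestronglyMeasurable
      (fun w => cgdLyapunov_nonneg hη0.le hom hmin _)
      (hV.sub (hgap.const_mul _))
      (fun w => by simpa only [hsnoc] using
        (hC n).integrable_cgdLyapunov_cgdStep hconv hf hlip xstar (x n w))
      (fun w => by simpa only [hsnoc] using
        (hC n).integral_cgdLyapunov_cgdStep_le hconv hf hlip hL hom hη xstar (x n w))
    rw [integral_sub hV (hgap.const_mul _), integral_const_mul] at h
    exact h
  · exact integrable_and_integral_le_of_integral_snoc_le
      ((hfc.measurable.comp (hxm _)).sub_const _).aestronglyMeasurable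
      (fun w => sub_nonneg.2 (hmin _)) hgap
      (fun w => by
        simp only [hsnoc]
        exact ((hC n).integrable_comp_cgdStep hconv hf hlip (x n w)).sub (integrable_const _))
      (fun w => by simpa only [hsnoc] using
        (hC n).integral_comp_cgdStep_sub_le hconv hf hlip hL hom hη xstar (x n w))

theorem integrable_cgd_iterate (hC : ∀ k, IsCompressionOperator (C k) om volume)
    (hconv : ConvexOn ℝ Set.univ f) (hf : Differentiable ℝ f)
    (hlip : ∀ x y, ‖gradient f x - gradient f y‖ ≤ L * ‖x - y‖) (hL : 0 ≤ L) (hom : 0 ≤ om)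
    (hη : (1 + om) * L * η = 1) (hmin : ∀ x, f xstar ≤ f x) {x0 : F} (hx0 : ∀ w, x 0 w = x0)
    (hx : ∀ k w, x (k + 1) w = cgdStep f η (C k (w (Fin.last k))) (x k fun i => w i.castSucc))
    (hxm : ∀ n, Measurable (x n)) :
    ∀ n, (Integrable fun w => cgdLyapunov f xstar η om (x n w))
      ∧ Integrable fun w => f (x n w) - f xstar
  | 0 => by simp only [hx0]; exact ⟨integrable_const _, integrable_const _⟩
  | n + 1 =>
    have ih := integrable_cgd_iterate hC hconv hf hlip hL hom hη hmin hx0 hx hxm n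
    have hstep := integral_cgd_iterate_succ_le hC hconv hf hlip hL hom hη hmin hx hxm n ih.1 ih.2
    ⟨hstep.1.1, hstep.2.1⟩

theorem natCast_mul_integral_cgd_iterate_sub_le [SecondCountableTopology F]
    (hC : ∀ k, IsCompressionOperator (C k) om volume) (hconv : ConvexOn ℝ Set.univ f)
    (hf : Differentiable ℝ f) (hlip : ∀ x y, ‖gradient f x - gradient f y‖ ≤ L * ‖x - y‖)
    (hL : 0 ≤ L) (hom : 0 ≤ om) (hη : (1 + om) * L * η = 1) (hmin : ∀ x, f xstar ≤ f x)
    {x0 : F} (hx0 : ∀ w, x 0 w = x0)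
    (hx : ∀ k w, x (k + 1) w = cgdStep f η (C k (w (Fin.last k))) (x k fun i => w i.castSucc))
    (k : ℕ) : k * ((∫ w, f (x k w)) - f xstar) ≤ (1 + om) * L * ‖x0 - xstar‖ ^ 2 := by
  have hη0 : 0 < η := pos_of_mul_pos_right (hη ▸ one_pos) (by positivity)
  have hgrad : Continuous (gradient f) :=
    (LipschitzWith.of_dist_le' (K := L) (by simpa only [dist_eq_norm] using hlip)).continuous
  have hxm := measurable_cgd_iterate (fun k => (hC k).measurable_uncurry) hgrad hx0 hx
  have hint := integrable_cgd_iterate hC hconv hf hlip hL hom hη hmin hx0 hx hxm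
  have hstep (n : ℕ) :=
    integral_cgd_iterate_succ_le hC hconv hf hlip hL hom hη hmin hx hxm n (hint n).1 (hint n).2
  have htele := Antitone.mul_natCast_mul_add_le
    (V := fun n => ∫ w, cgdLyapunov f xstar η om (x n w))
    (δ := fun n => ∫ w, (f (x n w) - f xstar))
    (antitone_nat_of_succ_le fun n => (hstep n).2.2) (by positivity) (fun n => (hstep n).1.2) k
  have hV0 : ∫ w : Fin 0 → Ω, cgdLyapunov f xstar η om (x 0 w) ≤ 2 * ‖x0 - xstar‖ ^ 2 := by
    simpa [hx0] using cgdLyapunov_le hf hlip hL hom hη hmin x0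
  have hVk : 0 ≤ ∫ w, cgdLyapunov f xstar η om (x k w) :=
    integral_nonneg fun w => cgdLyapunov_nonneg hη0.le hom hmin _
  have hfk : Integrable fun w => f (x k w) := by
    simpa using (integrable_add_const_iff (c := f xstar)).2 (hint k).2
  have hdecay := mul_le_mul_of_nonneg_left (le_of_add_le_of_nonneg_left (htele.trans hV0) hVk)
    (by positivity : 0 ≤ (1 + om) * L / 2)
  rw [integral_sub hfk (integrable_const _)] at hdecay
  simp only [integral_const, probReal_univ, one_smul] at hdecay
  linear_combination hdecay - (k * ((∫ w, f (x k w)) - f xstar)) * hη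

end Iterates

theorem cgd_convex_rate {d : ℕ}
    (f : EuclideanSpace ℝ (Fin d) → ℝ) (L : ℝ) (hL : 0 < L)
    (hconv : ConvexOn ℝ Set.univ f)
    (hdiff : Differentiable ℝ f)
    (hlip : ∀ x y, ‖gradient f x - gradient f y‖ ≤ L * ‖x - y‖)
    (xstar : EuclideanSpace ℝ (Fin d)) (hmin : ∀ x, f xstar ≤ f x)
    (om : ℝ) (hom : 0 ≤ om)
    {Ω : Type*} [MeasureSpace Ω] [IsProbabilityMeasure (volume : Measure Ω)]
    (C : ℕ → Ω → EuclideanSpace ℝ (Fin d) → EuclideanSpace ℝ (Fin d))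
    (hCmeas : ∀ k, Measurable fun q : Ω × EuclideanSpace ℝ (Fin d) => C k q.1 q.2)
    (hCint : ∀ k v, Integrable (fun ω => C k ω v))
    (hCmean : ∀ k v, (∫ ω, C k ω v) = v)
    (hCsqint : ∀ k v, Integrable (fun ω => ‖C k ω v - v‖ ^ 2))
    (hCvar : ∀ k v, (∫ ω, ‖C k ω v - v‖ ^ 2) ≤ om * ‖v‖ ^ 2)
    (η : ℝ) (hη : η = 1 / ((1 + om) * L))
    (x0 : EuclideanSpace ℝ (Fin d))
    (x : (k : ℕ) → (Fin k → Ω) → EuclideanSpace ℝ (Fin d))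
    (hx0 : ∀ w, x 0 w = x0)
    (hxrec : ∀ k (w : Fin (k + 1) → Ω),
      x (k + 1) w = x k (fun i => w i.castSucc)
        - η • C k (w (Fin.last k)) (gradient f (x k (fun i => w i.castSucc))))
    (k : ℕ) (hk : 1 ≤ k) :
    (∫ w : Fin k → Ω, f (x k w)) - f xstar
        ≤ (1 + om) * L * ‖x0 - xstar‖ ^ 2 / k
      ∧ ∀ ε : ℝ, 0 < ε → (1 + om) * L * ‖x0 - xstar‖ ^ 2 / ε ≤ (k : ℝ) →
          (∫ w : Fin k → Ω, f (x k w)) - f xstar ≤ ε := by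
  have hηL : (1 + om) * L * η = 1 := by
    rw [hη]
    field_simp
  have hC (k : ℕ) : IsCompressionOperator (C k) om volume :=
    ⟨hCmeas k, fun v => memLp_two_of_integrable_norm_sub_sq (hCint k v).1 (hCsqint k v),
      hCmean k, hCvar k⟩
  have hk0 : (0 : ℝ) < k := Nat.cast_pos.2 hk
  have hbound : (∫ w, f (x k w)) - f xstar ≤ (1 + om) * L * ‖x0 - xstar‖ ^ 2 / k := by
    rw [le_div_iff₀' hk0]
    exact natCast_mul_integral_cgd_iterate_sub_le hC hconv hdiff hlip hL.le hom hηL hmin hx0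
      hxrec k
  exact ⟨hbound, fun ε hε hkε => hbound.trans ((div_le_comm₀ hε hk0).1 hkε)⟩
end

section
/- Let f_1, …, f_n : ℝ^d → ℝ be differentiable and f = (1/n)∑_{i=1}^n f_i. Let x^k, w^k ∈ ℝ^d and h_1, …, h_n ∈ ℝ^d, set h = (1/n)∑_{i=1}^n h_i, and let C_1, …, C_n be independent ω-compression operators. Define g^k = (1/n)∑_{i=1}^n C_i(∇f_i(x^k) − h_i) + h. Then E[‖g^k − ∇f(x^k)‖²] ≤ (2ω/n²) ∑_{i=1}^n ‖∇f_i(w^k) − ∇f_i(x^k)‖² + (2ω/n) · (1/n)∑_{i=1}^n ‖h_i − ∇f_i(w^k)‖². -/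
/-!
With `vᵢ = ∇fᵢ(xᵏ) - hᵢ` the error is `gᵏ - ∇f(xᵏ) = (1/n) ∑ᵢ (Cᵢ(vᵢ) - vᵢ)`. The summands are
independent and centred, so the cross terms vanish in expectation and
`E‖gᵏ - ∇f(xᵏ)‖² = (1/n²) ∑ᵢ E‖Cᵢ(vᵢ) - vᵢ‖² ≤ (ω/n²) ∑ᵢ ‖vᵢ‖²`.
Splitting `vᵢ` through `∇fᵢ(wᵏ)` gives `‖vᵢ‖² ≤ 2‖∇fᵢ(wᵏ) - ∇fᵢ(xᵏ)‖² + 2‖hᵢ - ∇fᵢ(wᵏ)‖²`.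
-/

open MeasureTheory ProbabilityTheory
open scoped RealInnerProductSpace

section SecondMoment

variable {ι E : Type*} [NormedAddCommGroup E] [InnerProductSpace ℝ E] [CompleteSpace E]
  [MeasurableSpace E] [BorelSpace E]

lemma integral_inner_eq_zero_of_indepFun {Ω : Type*} [MeasurableSpace Ω] {μ : Measure Ω}
    {X Y : Ω → E} (hXY : X ⟂ᵢ[μ] Y) (hX : Integrable X μ) (hY : Integrable Y μ)
    (hY0 : μ[Y] = 0) :
    ∫ ω, ⟪X ω, Y ω⟫ ∂μ = 0 :=
  (hXY.integral_bilin hX hY (innerSL ℝ)).trans (by simp [hY0])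

theorem integral_norm_sum_sq_of_pairwise_indepFun {Ω : Type*} [MeasurableSpace Ω]
    {μ : Measure Ω} {s : Finset ι} {X : ι → Ω → E}
    (hX : ∀ i ∈ s, Integrable (X i) μ) (hX2 : ∀ i ∈ s, Integrable (fun ω ↦ ‖X i ω‖ ^ 2) μ)
    (hmean : ∀ i ∈ s, μ[X i] = 0)
    (hindep : (s : Set ι).Pairwise fun i j ↦ X i ⟂ᵢ[μ] X j) :
    ∫ ω, ‖∑ i ∈ s, X i ω‖ ^ 2 ∂μ = ∑ i ∈ s, ∫ ω, ‖X i ω‖ ^ 2 ∂μ := by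
  have hinner : ∀ i ∈ s, ∀ j ∈ s, Integrable (fun ω ↦ ⟪X i ω, X j ω⟫) μ := by
    intro i hi j hj
    rcases eq_or_ne i j with rfl | hij
    · simpa only [real_inner_self_eq_norm_sq] using hX2 i hi
    · exact (hindep hi hj hij).integrable_bilin (hX i hi) (hX j hj) (innerSL ℝ)
  calc ∫ ω, ‖∑ i ∈ s, X i ω‖ ^ 2 ∂μ
      = ∫ ω, ∑ i ∈ s, ∑ j ∈ s, ⟪X i ω, X j ω⟫ ∂μ := by
        simp_rw [← real_inner_self_eq_norm_sq, sum_inner, inner_sum]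
    _ = ∑ i ∈ s, ∑ j ∈ s, ∫ ω, ⟪X i ω, X j ω⟫ ∂μ := by
        rw [integral_finsetSum _ fun i hi ↦ integrable_finsetSum _ (hinner i hi)]
        exact Finset.sum_congr rfl fun i hi ↦ integral_finsetSum _ (hinner i hi)
    _ = ∑ i ∈ s, ∫ ω, ‖X i ω‖ ^ 2 ∂μ := by
        refine Finset.sum_congr rfl fun i hi ↦ ?_
        rw [Finset.sum_eq_single_of_mem i hi fun j hj hji ↦
          integral_inner_eq_zero_of_indepFun (hindep hi hj hji.symm) (hX i hi) (hX j hj)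
            (hmean j hj)]
        simp only [real_inner_self_eq_norm_sq]

theorem integral_norm_sum_sq_pi [Fintype ι] {Ω : ι → Type*} [∀ i, MeasurableSpace (Ω i)]
    {μ : ∀ i, Measure (Ω i)} [∀ i, IsProbabilityMeasure (μ i)] {X : ∀ i, Ω i → E}
    (hX : ∀ i, Integrable (X i) (μ i)) (hX2 : ∀ i, Integrable (fun ω ↦ ‖X i ω‖ ^ 2) (μ i))
    (hmean : ∀ i, (μ i)[X i] = 0) :
    ∫ ω, ‖∑ i, X i (ω i)‖ ^ 2 ∂Measure.pi μ = ∑ i, ∫ ω, ‖X i ω‖ ^ 2 ∂μ i := by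
  have heval := fun i ↦ measurePreserving_eval μ i
  refine (integral_norm_sum_sq_of_pairwise_indepFun (X := fun i (ω : ∀ i, Ω i) ↦ X i (ω i))
    (fun i _ ↦ (heval i).integrable_comp_of_integrable (hX i))
    (fun i _ ↦ (heval i).integrable_comp_of_integrable (hX2 i))
    (fun i _ ↦ by rw [integral_comp_eval (hX i).1, hmean i])
    (fun i _ j _ hij ↦ (iIndepFun_pi fun i ↦ (hX i).aemeasurable).indepFun hij)).trans ?_
  exact Finset.sum_congr rfl fun i _ ↦ integral_comp_eval (f := fun x ↦ ‖X i x‖ ^ 2) (hX2 i).1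

end SecondMoment

theorem gradient_const_mul_sum {ι F : Type*} [NormedAddCommGroup F] [InnerProductSpace ℝ F]
    [CompleteSpace F] {s : Finset ι} {f : ι → F → ℝ} {x : F}
    (hf : ∀ i ∈ s, DifferentiableAt ℝ (f i) x) (c : ℝ) :
    gradient (fun y ↦ c * ∑ i ∈ s, f i y) x = c • ∑ i ∈ s, gradient (f i) x := by
  have hderiv := (HasFDerivAt.fun_sum fun i hi ↦ (hf i hi).hasFDerivAt).const_mul c
  rw [hderiv.hasGradientAt.gradient]
  simp only [map_smul, map_sum, gradient]

lemma norm_sub_sq_le_two_mul {E : Type*} [SeminormedAddCommGroup E] (a b c : E) :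
    ‖a - c‖ ^ 2 ≤ 2 * ‖a - b‖ ^ 2 + 2 * ‖b - c‖ ^ 2 :=
  calc ‖a - c‖ ^ 2 ≤ (‖a - b‖ + ‖b - c‖) ^ 2 := by
        gcongr
        exact norm_sub_le_norm_sub_add_norm_sub a b c
    _ ≤ 2 * ‖a - b‖ ^ 2 + 2 * ‖b - c‖ ^ 2 := by
        linarith [add_sq_le (a := ‖a - b‖) (b := ‖b - c‖)]

theorem adiana_variance_bound_general {d n : ℕ}
    (fi : Fin n → EuclideanSpace ℝ (Fin d) → ℝ)
    (hdiff : ∀ i, Differentiable ℝ (fi i))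
    (f : EuclideanSpace ℝ (Fin d) → ℝ)
    (hf : ∀ x, f x = (1 / (n : ℝ)) * ∑ i, fi i x)
    (xk wk : EuclideanSpace ℝ (Fin d))
    (h : Fin n → EuclideanSpace ℝ (Fin d))
    (hbar : EuclideanSpace ℝ (Fin d)) (hhbar : hbar = (1 / (n : ℝ)) • ∑ i, h i)
    (om : ℝ) (hom : 0 ≤ om)
    {Ω : Type*} [MeasureSpace Ω] [IsProbabilityMeasure (volume : Measure Ω)]
    (C : Fin n → Ω → EuclideanSpace ℝ (Fin d) → EuclideanSpace ℝ (Fin d))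
    (hCint : ∀ i v, Integrable (fun ω => C i ω v))
    (hCmean : ∀ i v, (∫ ω, C i ω v) = v)
    (hCsqint : ∀ i v, Integrable (fun ω => ‖C i ω v - v‖ ^ 2))
    (hCvar : ∀ i v, (∫ ω, ‖C i ω v - v‖ ^ 2) ≤ om * ‖v‖ ^ 2)
    (g : (Fin n → Ω) → EuclideanSpace ℝ (Fin d))
    (hg : ∀ w, g w
      = (1 / (n : ℝ)) • ∑ i, C i (w i) (gradient (fi i) xk - h i) + hbar) :
    (∫ w : Fin n → Ω, ‖g w - gradient f xk‖ ^ 2)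
      ≤ 2 * om / (n : ℝ) ^ 2 * ∑ i, ‖gradient (fi i) wk - gradient (fi i) xk‖ ^ 2
        + 2 * om / (n : ℝ)
          * ((1 / (n : ℝ)) * ∑ i, ‖h i - gradient (fi i) wk‖ ^ 2) := by
  set v := fun i ↦ gradient (fi i) xk - h i
  have hgrad : gradient f xk = (1 / (n : ℝ)) • ∑ i, gradient (fi i) xk := by
    rw [funext hf]
    exact gradient_const_mul_sum (fun i _ ↦ (hdiff i).differentiableAt) _
  have herr : ∀ w, g w - gradient f xk = (1 / (n : ℝ)) • ∑ i, (C i (w i) (v i) - v i) := by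
    intro w
    simp only [hg, hgrad, hhbar, v, Finset.sum_sub_distrib]
    module
  have hmean : ∀ i, ∫ ω, C i ω (v i) - v i = 0 := fun i ↦ by
    rw [integral_sub (hCint i _) (integrable_const _), hCmean, integral_const]
    simp
  calc (∫ w : Fin n → Ω, ‖g w - gradient f xk‖ ^ 2)
      = (1 / (n : ℝ)) ^ 2 * ∑ i, ∫ ω, ‖C i ω (v i) - v i‖ ^ 2 := by
        simp_rw [herr, norm_smul, mul_pow, Real.norm_eq_abs, sq_abs]
        rw [integral_const_mul]
        congr 1
        exact integral_norm_sum_sq_pi (fun i ↦ (hCint i _).sub (integrable_const _))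
          (fun i ↦ hCsqint i _) hmean
    _ ≤ (1 / (n : ℝ)) ^ 2 * ∑ i, om * (2 * ‖h i - gradient (fi i) wk‖ ^ 2
          + 2 * ‖gradient (fi i) wk - gradient (fi i) xk‖ ^ 2) := by
        gcongr with i
        refine (hCvar i _).trans ?_
        gcongr
        rw [norm_sub_rev]
        exact norm_sub_sq_le_two_mul _ _ _
    _ = _ := by
        simp only [Finset.mul_sum, ← Finset.sum_add_distrib]
        exact Finset.sum_congr rfl fun i _ ↦ by ring

theorem adiana_variance_bound {d n : ℕ} (hn : 0 < n)
    (fi : Fin n → EuclideanSpace ℝ (Fin d) → ℝ)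
    (hdiff : ∀ i, Differentiable ℝ (fi i))
    (f : EuclideanSpace ℝ (Fin d) → ℝ)
    (hf : ∀ x, f x = (1 / (n : ℝ)) * ∑ i, fi i x)
    (xk wk : EuclideanSpace ℝ (Fin d))
    (h : Fin n → EuclideanSpace ℝ (Fin d))
    (hbar : EuclideanSpace ℝ (Fin d)) (hhbar : hbar = (1 / (n : ℝ)) • ∑ i, h i)
    (om : ℝ) (hom : 0 ≤ om)
    {Ω : Type*} [MeasureSpace Ω] [IsProbabilityMeasure (volume : Measure Ω)]
    (C : Fin n → Ω → EuclideanSpace ℝ (Fin d) → EuclideanSpace ℝ (Fin d))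
    (hCint : ∀ i v, Integrable (fun ω => C i ω v))
    (hCmean : ∀ i v, (∫ ω, C i ω v) = v)
    (hCsqint : ∀ i v, Integrable (fun ω => ‖C i ω v - v‖ ^ 2))
    (hCvar : ∀ i v, (∫ ω, ‖C i ω v - v‖ ^ 2) ≤ om * ‖v‖ ^ 2)
    (g : (Fin n → Ω) → EuclideanSpace ℝ (Fin d))
    (hg : ∀ w, g w
      = (1 / (n : ℝ)) • ∑ i, C i (w i) (gradient (fi i) xk - h i) + hbar) :
    (∫ w : Fin n → Ω, ‖g w - gradient f xk‖ ^ 2)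
      ≤ 2 * om / (n : ℝ) ^ 2 * ∑ i, ‖gradient (fi i) wk - gradient (fi i) xk‖ ^ 2
        + 2 * om / (n : ℝ)
          * ((1 / (n : ℝ)) * ∑ i, ‖h i - gradient (fi i) wk‖ ^ 2) :=
  adiana_variance_bound_general fi hdiff f hf xk wk h hbar hhbar om hom C hCint hCmean hCsqint hCvar
    g hg
end

section
/- Let f_1, …, f_n : ℝ^d → ℝ be differentiable, let x^k, y^k, w^k ∈ ℝ^d and h_1^k, …, h_n^k ∈ ℝ^d, let ω ≥ 0, 0 < α ≤ 1/(1+ω), p ∈ [0,1], and let C_1, …, C_n be independent ω-compression operators, independent of a Bernoulli(p) variable defining w^{k+1} (w^{k+1} = y^k with probability p, w^{k+1} = w^k with probability 1 − p). Define h_i^{k+1} = h_i^k + α C_i(∇f_i(w^k) − h_i^k) and ℋ^k = (1/n)∑_{i=1}^n ‖h_i^k − ∇f_i(w^k)‖², ℋ^{k+1} = (1/n)∑_{i=1}^n ‖h_i^{k+1} − ∇f_i(w^{k+1})‖². Then E[ℋ^{k+1}] ≤ (1 − α/2) ℋ^k + (1 + 2p/α)(2p/n) ( ∑_{i=1}^n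 ‖∇f_i(w^k) − ∇f_i(x^k)‖² + ∑_{i=1}^n ‖∇f_i(y^k) − ∇f_i(x^k)‖² ). -/
/-!
Write `u_i = ∇f_i(w) - h_i`. Then `h_i⁺ - ∇f_i(w) = α C_i(u_i) - u_i` and
`h_i⁺ - ∇f_i(y) = (α C_i(u_i) - u_i) + (∇f_i(w) - ∇f_i(y))`. Since `C_i` is unbiased the cross
terms vanish in expectation, so `E‖α C_i(u_i) - u_i + c‖² = α² E‖C_i(u_i) - u_i‖² + ‖(α - 1) u_i + c‖²`,
and `α(1 + ω) ≤ 1` turns `α²ω + (1 - α)²` into at most `1 - α`. Averaging over the coin, Young's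
inequality with weight `α / 2p` on the branch `w⁺ = y` costs a factor `1 + α/2` on `‖(1 - α) u_i‖²`
and `1 + 2p/α` on `‖∇f_i(w) - ∇f_i(y)‖²`; the former still leaves the contraction `1 - α/2`, and
the latter is split through `∇f_i(x)` by `‖a - b‖² ≤ 2‖a‖² + 2‖b‖²`.
-/

open MeasureTheory
open scoped RealInnerProductSpace

lemma norm_sub_sq_le_two_mul_add {E : Type*} [SeminormedAddCommGroup E] (a b : E) :
    ‖a - b‖ ^ 2 ≤ 2 * (‖a‖ ^ 2 + ‖b‖ ^ 2) :=
  (pow_le_pow_left₀ (norm_nonneg _) (norm_sub_le a b) 2).trans add_sq_le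

section InnerProduct

variable {E : Type*} [NormedAddCommGroup E] [InnerProductSpace ℝ E]

lemma norm_smul_add_sq (a : ℝ) (x c : E) :
    ‖a • x + c‖ ^ 2 = a ^ 2 * ‖x‖ ^ 2 + 2 * a * ⟪c, x⟫ + ‖c‖ ^ 2 := by
  rw [norm_add_sq_real, norm_smul, mul_pow, Real.norm_eq_abs, sq_abs, real_inner_smul_left,
    real_inner_comm]
  ring

lemma one_sub_mul_norm_sq_add_mul_norm_add_sq_le (a b : E) {p α : ℝ} (hp : 0 ≤ p)
    (hα : 0 < α) :
    (1 - p) * ‖a‖ ^ 2 + p * ‖a + b‖ ^ 2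
      ≤ (1 + α / 2) * ‖a‖ ^ 2 + p * (1 + 2 * p / α) * ‖b‖ ^ 2 := by
  have hinner : p * ⟪a, b⟫ ≤ p * (‖a‖ * ‖b‖) :=
    mul_le_mul_of_nonneg_left (real_inner_le_norm a b) hp
  have hyoung : 2 * p * (‖a‖ * ‖b‖) ≤ α / 2 * ‖a‖ ^ 2 + 2 * p ^ 2 / α * ‖b‖ ^ 2 := by
    have h := div_nonneg (sq_nonneg (α * ‖a‖ - 2 * p * ‖b‖)) (mul_nonneg zero_le_two hα.le)
    rw [show (α * ‖a‖ - 2 * p * ‖b‖) ^ 2 / (2 * α)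
        = α / 2 * ‖a‖ ^ 2 + 2 * p ^ 2 / α * ‖b‖ ^ 2 - 2 * p * (‖a‖ * ‖b‖) by
      field_simp; ring] at h
    linarith
  have hexp : p * (1 + 2 * p / α) * ‖b‖ ^ 2 = p * ‖b‖ ^ 2 + 2 * p ^ 2 / α * ‖b‖ ^ 2 := by ring
  rw [norm_add_sq_real, hexp]
  linarith

end InnerProduct

section Moments

variable {Ω E : Type*} [MeasurableSpace Ω] {μ : Measure Ω}
  [NormedAddCommGroup E] [InnerProductSpace ℝ E] {X : Ω → E}

lemma integrable_norm_smul_add_sq [IsFiniteMeasure μ] (hX : Integrable X μ)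
    (hX2 : Integrable (fun ω => ‖X ω‖ ^ 2) μ) (a : ℝ) (c : E) :
    Integrable (fun ω => ‖a • X ω + c‖ ^ 2) μ := by
  simp_rw [norm_smul_add_sq]
  exact ((hX2.const_mul _).add ((hX.const_inner c).const_mul _)).add (integrable_const _)

lemma integral_norm_smul_add_sq [CompleteSpace E] [IsProbabilityMeasure μ] (hX : Integrable X μ)
    (hX2 : Integrable (fun ω => ‖X ω‖ ^ 2) μ) (hmean : ∫ ω, X ω ∂μ = 0) (a : ℝ) (c : E) :
    ∫ ω, ‖a • X ω + c‖ ^ 2 ∂μ = a ^ 2 * ∫ ω, ‖X ω‖ ^ 2 ∂μ + ‖c‖ ^ 2 := by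
  have hvar : Integrable (fun ω => a ^ 2 * ‖X ω‖ ^ 2) μ := hX2.const_mul _
  have hcross : Integrable (fun ω => 2 * a * ⟪c, X ω⟫) μ := (hX.const_inner c).const_mul _
  simp_rw [norm_smul_add_sq]
  rw [integral_add (f := fun ω => a ^ 2 * ‖X ω‖ ^ 2 + 2 * a * ⟪c, X ω⟫) (hvar.add hcross)
      (integrable_const _), integral_add hvar hcross,
    integral_const_mul, integral_const_mul, integral_inner hX, hmean]
  simp

end Moments

section Bernoulli

variable {Ω Ω' T : Type*} [MeasurableSpace Ω] [MeasurableSpace Ω'] {μ : Measure Ω} [SFinite μ]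
  {ν : Measure Ω'} [IsProbabilityMeasure ν]

lemma integral_prod_comp_piecewise (F : Ω → T → ℝ) {x y : T}
    (hx : Integrable (F · x) μ) (hy : Integrable (F · y) μ) {A : Set Ω'} (hA : MeasurableSet A)
    {p : ℝ} (hp : 0 ≤ p) (hAp : ν A = ENNReal.ofReal p) {W : Ω' → T}
    (hWA : ∀ ω ∈ A, W ω = y) (hWAc : ∀ ω ∉ A, W ω = x) :
    ∫ z, F z.1 (W z.2) ∂μ.prod ν = (1 - p) * ∫ ω, F ω x ∂μ + p * ∫ ω, F ω y ∂μ := by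
  have hsplit : ∀ z : Ω × Ω', F z.1 (W z.2)
      = F z.1 x * Aᶜ.indicator 1 z.2 + F z.1 y * A.indicator 1 z.2 := by
    rintro ⟨ω, ω'⟩
    by_cases h : ω' ∈ A <;> simp [h, hWA, hWAc]
  have hνA : ν.real A = p := by rw [measureReal_def, hAp, ENNReal.toReal_ofReal hp]
  have hone : Integrable (1 : Ω' → ℝ) ν := integrable_const 1
  have hxAc : Integrable (fun z : Ω × Ω' => F z.1 x * Aᶜ.indicator 1 z.2) (μ.prod ν) :=
    hx.mul_prod (hone.indicator hA.compl)
  have hyA : Integrable (fun z : Ω × Ω' => F z.1 y * A.indicator 1 z.2) (μ.prod ν) :=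
    hy.mul_prod (hone.indicator hA)
  simp_rw [hsplit]
  rw [integral_add hxAc hyA, integral_prod_mul (fun ω => F ω x),
    integral_prod_mul (fun ω => F ω y), integral_indicator_one hA.compl,
    integral_indicator_one hA, probReal_compl_eq_one_sub hA, hνA]
  ring

end Bernoulli

section PiSum

variable {ι Ω : Type*} [Fintype ι] [MeasurableSpace Ω] {μ : Measure Ω} {g : ι → Ω → ℝ}

lemma integrable_sum_comp_eval [IsFiniteMeasure μ] (hg : ∀ i, Integrable (g i) μ) :
    Integrable (fun ω : ι → Ω => ∑ i, g i (ω i)) (Measure.pi fun _ => μ) :=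
  integrable_finsetSum _ fun i _ => integrable_comp_eval (hg i)

lemma integral_sum_comp_eval [IsProbabilityMeasure μ] (hg : ∀ i, Integrable (g i) μ) :
    ∫ ω : ι → Ω, ∑ i, g i (ω i) ∂Measure.pi (fun _ => μ) = ∑ i, ∫ ω, g i ω ∂μ := by
  rw [integral_finsetSum _ fun i _ => integrable_comp_eval (hg i)]
  exact Finset.sum_congr rfl fun i _ => integral_comp_eval (hg i).aestronglyMeasurable

end PiSum

section ShiftUpdate

variable {Ω E : Type*} [MeasurableSpace Ω] {μ : Measure Ω}
  [NormedAddCommGroup E] [InnerProductSpace ℝ E] {C : Ω → E}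

lemma add_smul_sub_eq (h c u g : E) (α : ℝ) :
    h + α • c - g = α • (c - u) + (h + α • u - g) := by
  rw [smul_sub]; abel

lemma integrable_norm_add_smul_sub_sq [IsFiniteMeasure μ] {u : E} (hC : Integrable C μ)
    (hC2 : Integrable (fun ω => ‖C ω - u‖ ^ 2) μ) (h g : E) (α : ℝ) :
    Integrable (fun ω => ‖h + α • C ω - g‖ ^ 2) μ := by
  have hX : Integrable (fun ω => C ω - u) μ := hC.sub (integrable_const u)
  refine (integrable_norm_smul_add_sq hX hC2 α (h + α • u - g)).congr (ae_of_all _ fun ω => ?_)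
  simp only [← add_smul_sub_eq]

lemma integral_shift_update_le [CompleteSpace E] [IsProbabilityMeasure μ] {h gw gy : E}
    {om α p : ℝ} (hC : Integrable C μ) (hmean : ∫ ω, C ω ∂μ = gw - h)
    (hC2 : Integrable (fun ω => ‖C ω - (gw - h)‖ ^ 2) μ)
    (hvar : ∫ ω, ‖C ω - (gw - h)‖ ^ 2 ∂μ ≤ om * ‖gw - h‖ ^ 2)
    (hα0 : 0 < α) (hα : α * (1 + om) ≤ 1) (hp : 0 ≤ p) :
    (1 - p) * ∫ ω, ‖h + α • C ω - gw‖ ^ 2 ∂μ + p * ∫ ω, ‖h + α • C ω - gy‖ ^ 2 ∂μ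
      ≤ (1 - α / 2) * ‖h - gw‖ ^ 2 + p * (1 + 2 * p / α) * ‖gw - gy‖ ^ 2 := by
  set u := gw - h
  have hX : Integrable (fun ω => C ω - u) μ := hC.sub (integrable_const u)
  have hX0 : ∫ ω, C ω - u ∂μ = 0 := by
    rw [integral_sub hC (integrable_const u), hmean, integral_const, probReal_univ, one_smul,
      sub_self]
  have hexpand : ∀ g, ∫ ω, ‖h + α • C ω - g‖ ^ 2 ∂μ
      = α ^ 2 * ∫ ω, ‖C ω - u‖ ^ 2 ∂μ + ‖(α - 1) • u + (gw - g)‖ ^ 2 := by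
    intro g
    have hshift : h + α • u - g = (α - 1) • u + (gw - g) := by
      simp only [u, sub_smul, one_smul]; abel
    rw [← integral_norm_smul_add_sq hX hC2 hX0 α, ← hshift]
    simp_rw [← add_smul_sub_eq]
  have hyoung := one_sub_mul_norm_sq_add_mul_norm_add_sq_le ((α - 1) • u) (gw - gy) hp hα0
  have ha : ‖(α - 1) • u‖ ^ 2 = (1 - α) ^ 2 * ‖h - gw‖ ^ 2 := by
    rw [norm_smul, mul_pow, Real.norm_eq_abs, sq_abs, norm_sub_rev, ← neg_sub α 1, neg_sq]
  rw [hexpand, hexpand, sub_self, add_zero]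
  rw [ha] at hyoung
  have hU : ‖u‖ = ‖h - gw‖ := norm_sub_rev _ _
  rw [hU] at hvar
  set U := ‖h - gw‖ ^ 2
  have hV : 0 ≤ ∫ ω, ‖C ω - u‖ ^ 2 ∂μ := integral_nonneg fun ω => sq_nonneg _
  have hU0 : 0 ≤ U := sq_nonneg _
  have hαU : α * om * U ≤ U - α * U := by nlinarith
  have hαU' : α * U ≤ U := by nlinarith
  nlinarith [mul_le_mul_of_nonneg_left hvar (sq_nonneg α)]

lemma integral_shift_update_le_of_anchor [CompleteSpace E] [IsProbabilityMeasure μ]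
    {h gw gy : E} {om α p : ℝ} (gx : E) (hC : Integrable C μ) (hmean : ∫ ω, C ω ∂μ = gw - h)
    (hC2 : Integrable (fun ω => ‖C ω - (gw - h)‖ ^ 2) μ)
    (hvar : ∫ ω, ‖C ω - (gw - h)‖ ^ 2 ∂μ ≤ om * ‖gw - h‖ ^ 2)
    (hα0 : 0 < α) (hα : α * (1 + om) ≤ 1) (hp : 0 ≤ p) :
    (1 - p) * ∫ ω, ‖h + α • C ω - gw‖ ^ 2 ∂μ + p * ∫ ω, ‖h + α • C ω - gy‖ ^ 2 ∂μ
      ≤ (1 - α / 2) * ‖h - gw‖ ^ 2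
        + (1 + 2 * p / α) * (2 * p) * (‖gw - gx‖ ^ 2 + ‖gy - gx‖ ^ 2) := by
  have hgap := norm_sub_sq_le_two_mul_add (gw - gx) (gy - gx)
  rw [sub_sub_sub_cancel_right] at hgap
  have hweight : 0 ≤ p * (1 + 2 * p / α) := by positivity
  nlinarith [integral_shift_update_le (gy := gy) hC hmean hC2 hvar hα0 hα hp,
    mul_le_mul_of_nonneg_left hgap hweight]

end ShiftUpdate

theorem adiana_shift_recursion_general {d n : ℕ}
    (fi : Fin n → EuclideanSpace ℝ (Fin d) → ℝ)
    (xk yk wk : EuclideanSpace ℝ (Fin d))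
    (hk : Fin n → EuclideanSpace ℝ (Fin d))
    (om α p : ℝ) (hα0 : 0 < α) (hα : α ≤ 1 / (1 + om))
    (hp0 : 0 ≤ p)
    {Ωc Ωb : Type*} [MeasureSpace Ωc] [MeasureSpace Ωb]
    [IsProbabilityMeasure (volume : Measure Ωc)]
    [IsProbabilityMeasure (volume : Measure Ωb)]
    (C : Fin n → Ωc → EuclideanSpace ℝ (Fin d) → EuclideanSpace ℝ (Fin d))
    (hCint : ∀ i v, Integrable (fun ω => C i ω v))
    (hCmean : ∀ i v, (∫ ω, C i ω v) = v)
    (hCsqint : ∀ i v, Integrable (fun ω => ‖C i ω v - v‖ ^ 2))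
    (hCvar : ∀ i v, (∫ ω, ‖C i ω v - v‖ ^ 2) ≤ om * ‖v‖ ^ 2)
    (A : Set Ωb) (hA : MeasurableSet A) (hAp : volume A = ENNReal.ofReal p)
    (hnext : Fin n → (Fin n → Ωc) → EuclideanSpace ℝ (Fin d))
    (hhnext : ∀ i ωc, hnext i ωc = hk i + α • C i (ωc i) (gradient (fi i) wk - hk i))
    (wnext : Ωb → EuclideanSpace ℝ (Fin d))
    (hw1 : ∀ ωb ∈ A, wnext ωb = yk) (hw2 : ∀ ωb ∉ A, wnext ωb = wk) :
    (∫ ω : (Fin n → Ωc) × Ωb,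
        (1 / (n : ℝ)) * ∑ i, ‖hnext i ω.1 - gradient (fi i) (wnext ω.2)‖ ^ 2)
      ≤ (1 - α / 2) * ((1 / (n : ℝ)) * ∑ i, ‖hk i - gradient (fi i) wk‖ ^ 2)
        + (1 + 2 * p / α) * (2 * p / (n : ℝ))
          * ((∑ i, ‖gradient (fi i) wk - gradient (fi i) xk‖ ^ 2)
            + ∑ i, ‖gradient (fi i) yk - gradient (fi i) xk‖ ^ 2) := by
  obtain rfl : hnext = fun i ωc => hk i + α • C i (ωc i) (gradient (fi i) wk - hk i) :=
    funext₂ hhnext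
  have hαom : α * (1 + om) ≤ 1 := (le_div_iff₀ (one_div_pos.mp (hα0.trans_le hα))).mp hα
  set G := fun i z ω => ‖hk i + α • C i ω (gradient (fi i) wk - hk i) - gradient (fi i) z‖ ^ 2
  have hG_int : ∀ i z, Integrable (G i z) := fun i z =>
    integrable_norm_add_smul_sub_sq (hCint i _) (hCsqint i _) _ _ _
  have hcoin := integral_prod_comp_piecewise (μ := (volume : Measure (Fin n → Ωc)))
    (ν := (volume : Measure Ωb)) (fun ωc z => (1 / (n : ℝ)) * ∑ i, G i z (ωc i)) (x := wk)
    (y := yk) ((integrable_sum_comp_eval (hG_int · wk)).const_mul _)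
    ((integrable_sum_comp_eval (hG_int · yk)).const_mul _) hA hp0 hAp hw1 hw2
  have hsum : ∀ z, ∫ ωc : Fin n → Ωc, (1 / (n : ℝ)) * ∑ i, G i z (ωc i)
      = (1 / n) * ∑ i, ∫ ω, G i z ω := fun z => by
    rw [integral_const_mul]
    exact congrArg _ (integral_sum_comp_eval (hG_int · z))
  rw [hsum, hsum] at hcoin
  refine hcoin.trans_le ?_
  calc _ = (1 / n) * ∑ i, ((1 - p) * (∫ ω, G i wk ω) + p * ∫ ω, G i yk ω) := by
        rw [Finset.sum_add_distrib, ← Finset.mul_sum, ← Finset.mul_sum]; ring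
    _ ≤ (1 / n) * ∑ i, ((1 - α / 2) * ‖hk i - gradient (fi i) wk‖ ^ 2
          + (1 + 2 * p / α) * (2 * p) * (‖gradient (fi i) wk - gradient (fi i) xk‖ ^ 2
            + ‖gradient (fi i) yk - gradient (fi i) xk‖ ^ 2)) := by
        gcongr _ * ∑ i, ?_ with i
        exact integral_shift_update_le_of_anchor _ (hCint i _) (hCmean i _) (hCsqint i _)
          (hCvar i _) hα0 hαom hp0
    _ = _ := by simp only [Finset.sum_add_distrib, ← Finset.mul_sum]; ring

theorem adiana_shift_recursion {d n : ℕ} (hn : 0 < n)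
    (fi : Fin n → EuclideanSpace ℝ (Fin d) → ℝ)
    (hdiff : ∀ i, Differentiable ℝ (fi i))
    (xk yk wk : EuclideanSpace ℝ (Fin d))
    (hk : Fin n → EuclideanSpace ℝ (Fin d))
    (om α p : ℝ) (hom : 0 ≤ om) (hα0 : 0 < α) (hα : α ≤ 1 / (1 + om))
    (hp0 : 0 ≤ p) (hp1 : p ≤ 1)
    {Ωc Ωb : Type*} [MeasureSpace Ωc] [MeasureSpace Ωb]
    [IsProbabilityMeasure (volume : Measure Ωc)]
    [IsProbabilityMeasure (volume : Measure Ωb)]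
    (C : Fin n → Ωc → EuclideanSpace ℝ (Fin d) → EuclideanSpace ℝ (Fin d))
    (hCint : ∀ i v, Integrable (fun ω => C i ω v))
    (hCmean : ∀ i v, (∫ ω, C i ω v) = v)
    (hCsqint : ∀ i v, Integrable (fun ω => ‖C i ω v - v‖ ^ 2))
    (hCvar : ∀ i v, (∫ ω, ‖C i ω v - v‖ ^ 2) ≤ om * ‖v‖ ^ 2)
    (A : Set Ωb) (hA : MeasurableSet A) (hAp : volume A = ENNReal.ofReal p)
    (hnext : Fin n → (Fin n → Ωc) → EuclideanSpace ℝ (Fin d))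
    (hhnext : ∀ i ωc, hnext i ωc = hk i + α • C i (ωc i) (gradient (fi i) wk - hk i))
    (wnext : Ωb → EuclideanSpace ℝ (Fin d))
    (hw1 : ∀ ωb ∈ A, wnext ωb = yk) (hw2 : ∀ ωb ∉ A, wnext ωb = wk) :
    (∫ ω : (Fin n → Ωc) × Ωb,
        (1 / (n : ℝ)) * ∑ i, ‖hnext i ω.1 - gradient (fi i) (wnext ω.2)‖ ^ 2)
      ≤ (1 - α / 2) * ((1 / (n : ℝ)) * ∑ i, ‖hk i - gradient (fi i) wk‖ ^ 2)
        + (1 + 2 * p / α) * (2 * p / (n : ℝ))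
          * ((∑ i, ‖gradient (fi i) wk - gradient (fi i) xk‖ ^ 2)
            + ∑ i, ‖gradient (fi i) yk - gradient (fi i) xk‖ ^ 2) :=
  adiana_shift_recursion_general fi xk yk wk hk om α p hα0 hα hp0 C hCint hCmean hCsqint hCvar A hA
    hAp hnext hhnext wnext hw1 hw2
end

section
/- Let f : ℝ^d → ℝ be convex and differentiable with minimizer x*, let ω ≥ 0, η > 0, x^k ∈ ℝ^d, and let C be an ω-compression operator. For the one-step CGD update x^{k+1} = x^k − η C(∇f(x^k)), it holds that E[‖x^{k+1} − x*‖²] ≤ ‖x^k − x*‖² − 2η (f(x^k) − f(x*)) + η² (1+ω) ‖∇f(x^k)‖², where the expectation is over the randomness of C. -/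
/-!
Since `C` is unbiased, the mean of `x^{k+1}` is the full gradient step `x^k - η ∇f(x^k)`, so the
bias–variance decomposition splits `E‖x^{k+1} - x*‖²` into `‖x^k - η ∇f(x^k) - x*‖²` and
`η² E‖C(∇f(x^k)) - ∇f(x^k)‖² ≤ η² ω ‖∇f(x^k)‖²`. Expanding the first term, the cross term
`-2η ⟪∇f(x^k), x^k - x*⟫` is bounded by `-2η (f(x^k) - f(x*))` by the first-order
characterisation of convexity.
-/

open MeasureTheory

theorem ConvexOn.add_apply_sub_le_of_hasFDerivAt {E : Type*} [NormedAddCommGroup E]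
    [NormedSpace ℝ E] {s : Set E} {f : E → ℝ} {f' : E →L[ℝ] ℝ} {x y : E}
    (hf : ConvexOn ℝ s f) (hx : x ∈ s) (hy : y ∈ s) (hf' : HasFDerivAt f f' x) :
    f x + f' (y - x) ≤ f y := by
  set L := AffineMap.lineMap (k := ℝ) x y
  have hL0 : L 0 = x := AffineMap.lineMap_apply_zero x y
  have hL1 : L 1 = y := AffineMap.lineMap_apply_one x y
  have hline : ConvexOn ℝ (L ⁻¹' s) (f ∘ L) := hf.comp_affineMap L
  have hderiv : HasDerivAt (f ∘ L) (f' (y - x)) 0 :=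
    (by simpa [L] using hf' : HasFDerivAt f f' (L 0)).comp_hasDerivAt 0
      AffineMap.hasDerivAt_lineMap
  have hslope := hline.le_slope_of_hasDerivAt (by simpa [hL0] using hx)
    (by simpa [hL1] using hy) zero_lt_one hderiv
  simp only [slope_def_field, Function.comp_apply, hL0, hL1, sub_zero, div_one] at hslope
  linarith

theorem ConvexOn.sub_le_inner_of_hasGradientAt {E : Type*} [NormedAddCommGroup E]
    [InnerProductSpace ℝ E] [CompleteSpace E] {s : Set E} {f : E → ℝ} {g x y : E}
    (hf : ConvexOn ℝ s f) (hx : x ∈ s) (hy : y ∈ s) (hg : HasGradientAt f g x) :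
    f x - f y ≤ inner ℝ g (x - y) := by
  have := hf.add_apply_sub_le_of_hasFDerivAt hx hy hg.hasFDerivAt
  rw [InnerProductSpace.toDual_apply_apply, ← neg_sub, inner_neg_right] at this
  linarith

theorem integral_norm_sub_sq_eq_norm_sub_sq_add {Ω E : Type*} [MeasurableSpace Ω]
    {μ : Measure Ω} [IsProbabilityMeasure μ] [NormedAddCommGroup E] [InnerProductSpace ℝ E]
    [CompleteSpace E] {Y : Ω → E} (hY : Integrable Y μ)
    (hY2 : Integrable (fun ω => ‖Y ω - ∫ ω, Y ω ∂μ‖ ^ 2) μ) (b : E) :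
    ∫ ω, ‖Y ω - b‖ ^ 2 ∂μ = ‖(∫ ω, Y ω ∂μ) - b‖ ^ 2 + ∫ ω, ‖Y ω - ∫ ω, Y ω ∂μ‖ ^ 2 ∂μ := by
  set m := ∫ ω, Y ω ∂μ
  have hcentered : Integrable (fun ω => Y ω - m) μ := hY.sub (integrable_const m)
  have hcross : ∫ ω, inner ℝ (m - b) (Y ω - m) ∂μ = 0 := by
    rw [integral_inner hcentered, integral_sub hY (integrable_const m)]
    simp [m]
  have hpoint : ∀ ω, ‖Y ω - b‖ ^ 2
      = ‖Y ω - m‖ ^ 2 + 2 * inner ℝ (m - b) (Y ω - m) + ‖m - b‖ ^ 2 := fun ω => by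
    rw [real_inner_comm, ← norm_add_sq_real, sub_add_sub_cancel]
  have hcross_int : Integrable (fun ω => 2 * inner ℝ (m - b) (Y ω - m)) μ :=
    (hcentered.const_inner _).const_mul 2
  simp_rw [hpoint]
  rw [integral_add (f := fun ω => ‖Y ω - m‖ ^ 2 + 2 * inner ℝ (m - b) (Y ω - m))
    (hY2.add hcross_int) (integrable_const _), integral_add hY2 hcross_int,
    integral_const_mul, hcross]
  simp only [mul_zero, add_zero, integral_const, probReal_univ, smul_eq_mul, one_mul]
  ring

theorem cgd_one_step_distance_general {d : ℕ}
    (f : EuclideanSpace ℝ (Fin d) → ℝ)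
    (hconv : ConvexOn ℝ Set.univ f) (hdiff : Differentiable ℝ f)
    (xstar : EuclideanSpace ℝ (Fin d))
    (om η : ℝ) (hη : 0 < η)
    {Ω : Type*} [MeasureSpace Ω] [IsProbabilityMeasure (volume : Measure Ω)]
    (C : Ω → EuclideanSpace ℝ (Fin d) → EuclideanSpace ℝ (Fin d))
    (hCint : ∀ v, Integrable (fun ω => C ω v))
    (hCmean : ∀ v, (∫ ω, C ω v) = v)
    (hCsqint : ∀ v, Integrable (fun ω => ‖C ω v - v‖ ^ 2))
    (hCvar : ∀ v, (∫ ω, ‖C ω v - v‖ ^ 2) ≤ om * ‖v‖ ^ 2)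
    (xk : EuclideanSpace ℝ (Fin d)) (xnext : Ω → EuclideanSpace ℝ (Fin d))
    (hx : ∀ ω, xnext ω = xk - η • C ω (gradient f xk)) :
    (∫ ω, ‖xnext ω - xstar‖ ^ 2)
      ≤ ‖xk - xstar‖ ^ 2 - 2 * η * (f xk - f xstar)
        + η ^ 2 * (1 + om) * ‖gradient f xk‖ ^ 2 := by
  set g := gradient f xk
  obtain rfl : xnext = fun ω => xk - η • C ω g := funext hx
  have hstep : Integrable (fun ω => η • C ω g) := (hCint g).smul η
  have hint : Integrable (fun ω => xk - η • C ω g) := (integrable_const xk).sub hstep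
  have hmean : ∫ ω, xk - η • C ω g = xk - η • g := by
    rw [integral_sub (integrable_const xk) hstep, integral_smul, hCmean, integral_const]
    simp
  have hdev : ∀ ω, ‖xk - η • C ω g - (xk - η • g)‖ ^ 2 = η ^ 2 * ‖C ω g - g‖ ^ 2 := fun ω => by
    rw [sub_sub_sub_cancel_left, ← smul_sub, norm_smul, mul_pow, Real.norm_eq_abs, sq_abs,
      norm_sub_rev]
  have hvar : ∫ ω, ‖xk - η • C ω g - (xk - η • g)‖ ^ 2 ≤ η ^ 2 * (om * ‖g‖ ^ 2) := by
    simp_rw [hdev, integral_const_mul]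
    exact mul_le_mul_of_nonneg_left (hCvar g) (sq_nonneg η)
  have hdescent : f xk - f xstar ≤ inner ℝ g (xk - xstar) :=
    hconv.sub_le_inner_of_hasGradientAt trivial trivial (hdiff xk).hasGradientAt
  have hbias : ‖xk - η • g - xstar‖ ^ 2
      = ‖xk - xstar‖ ^ 2 - 2 * η * inner ℝ g (xk - xstar) + η ^ 2 * ‖g‖ ^ 2 := by
    rw [sub_right_comm, norm_sub_sq_real, real_inner_smul_right, real_inner_comm, norm_smul,
      mul_pow, Real.norm_eq_abs, sq_abs]
    ring
  have hvar_int : Integrable (fun ω => ‖xk - η • C ω g - (xk - η • g)‖ ^ 2) := by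
    simpa only [hdev] using (hCsqint g).const_mul (η ^ 2)
  rw [integral_norm_sub_sq_eq_norm_sub_sq_add hint (by rwa [hmean]), hmean, hbias]
  nlinarith [mul_le_mul_of_nonneg_left hdescent hη.le]

theorem cgd_one_step_distance {d : ℕ}
    (f : EuclideanSpace ℝ (Fin d) → ℝ)
    (hconv : ConvexOn ℝ Set.univ f) (hdiff : Differentiable ℝ f)
    (xstar : EuclideanSpace ℝ (Fin d)) (hmin : ∀ x, f xstar ≤ f x)
    (om η : ℝ) (hom : 0 ≤ om) (hη : 0 < η)
    {Ω : Type*} [MeasureSpace Ω] [IsProbabilityMeasure (volume : Measure Ω)]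
    (C : Ω → EuclideanSpace ℝ (Fin d) → EuclideanSpace ℝ (Fin d))
    (hCint : ∀ v, Integrable (fun ω => C ω v))
    (hCmean : ∀ v, (∫ ω, C ω v) = v)
    (hCsqint : ∀ v, Integrable (fun ω => ‖C ω v - v‖ ^ 2))
    (hCvar : ∀ v, (∫ ω, ‖C ω v - v‖ ^ 2) ≤ om * ‖v‖ ^ 2)
    (xk : EuclideanSpace ℝ (Fin d)) (xnext : Ω → EuclideanSpace ℝ (Fin d))
    (hx : ∀ ω, xnext ω = xk - η • C ω (gradient f xk)) :
    (∫ ω, ‖xnext ω - xstar‖ ^ 2)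
      ≤ ‖xk - xstar‖ ^ 2 - 2 * η * (f xk - f xstar)
        + η ^ 2 * (1 + om) * ‖gradient f xk‖ ^ 2 :=
  cgd_one_step_distance_general f hconv hdiff xstar om η hη C hCint hCmean hCsqint hCvar xk xnext hx
end

section
/- Let f : ℝ^d → ℝ be differentiable with L-Lipschitz continuous gradient, let ω ≥ 0, η > 0, x^k ∈ ℝ^d, and let C be an ω-compression operator. For the one-step CGD update x^{k+1} = x^k − η C(∇f(x^k)), it holds that E[f(x^{k+1})] ≤ f(x^k) − η (1 − Lη(1+ω)/2) ‖∇f(x^k)‖², where the expectation is over the randomness of C. -/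
/-!
The descent lemma `f (x + Δ) ≤ f x + ⟪∇f x, Δ⟫ + L/2 ‖Δ‖²` holds for every step `Δ`; taking
expectations over the random step `Δ = -η C(∇f x)` replaces `⟪∇f x, Δ⟫` by `-η ‖∇f x‖²` by
unbiasedness, and `E ‖C(g)‖² = ‖g‖² + E ‖C(g) - g‖² ≤ (1 + ω) ‖g‖²` bounds the quadratic term.
-/

open MeasureTheory
open scoped RealInnerProductSpace

theorem nonneg_of_norm_sub_le_mul_norm_sub {E G : Type*} [NormedAddCommGroup E] [Nontrivial E]
    [SeminormedAddCommGroup G] {g : E → G} {L : ℝ} (h : ∀ x y, ‖g x - g y‖ ≤ L * ‖x - y‖) :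
    0 ≤ L := by
  obtain ⟨x, hx⟩ := exists_ne (0 : E)
  exact nonneg_of_mul_nonneg_left ((norm_nonneg _).trans (h x 0)) (by simpa using hx)

section Smooth

variable {E : Type*} [NormedAddCommGroup E] [InnerProductSpace ℝ E] [CompleteSpace E]
  {f : E → ℝ} {L : ℝ}

theorem abs_sub_sub_inner_gradient_le (hdiff : Differentiable ℝ f)
    (hlip : ∀ x y, ‖gradient f x - gradient f y‖ ≤ L * ‖x - y‖) (x y : E) :
    |f y - f x - ⟪gradient f x, y - x⟫| ≤ L / 2 * ‖y - x‖ ^ 2 := by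
  set v := y - x
  have hline : ∀ t : ℝ, HasDerivAt (fun s : ℝ => x + s • v) v t := fun t => by
    simpa using ((hasDerivAt_id t).smul_const v).const_add x
  -- compare `φ t = f (x + t v) - f x - t ⟪∇f x, v⟫` with `L/2 t² ‖v‖²` on `[0, 1]`
  have hφ : ∀ t : ℝ, HasDerivAt (fun s : ℝ => f (x + s • v) - f x - s * ⟪gradient f x, v⟫)
      (⟪gradient f (x + t • v), v⟫ - ⟪gradient f x, v⟫) t := fun t =>
    (((hdiff _).hasGradientAt.hasFDerivAt.comp_hasDerivAt t (hline t)).sub_const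
      (f x)).sub (hasDerivAt_mul_const ⟪gradient f x, v⟫)
  have hB : ∀ t : ℝ, HasDerivAt (fun s : ℝ => L / 2 * s ^ 2 * ‖v‖ ^ 2) (L * t * ‖v‖ ^ 2) t :=
    fun t => (((hasDerivAt_pow 2 t).const_mul (L / 2)).mul_const (‖v‖ ^ 2)).congr_deriv
      (by rw [Nat.cast_ofNat, Nat.add_one_sub_one, pow_one]; ring)
  have hbound : ∀ t ∈ Set.Ico (0 : ℝ) 1,
      ‖⟪gradient f (x + t • v), v⟫ - ⟪gradient f x, v⟫‖ ≤ L * t * ‖v‖ ^ 2 := by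
    rintro t ⟨ht, -⟩
    calc ‖⟪gradient f (x + t • v), v⟫ - ⟪gradient f x, v⟫‖
        = |⟪gradient f (x + t • v) - gradient f x, v⟫| := by rw [inner_sub_left, Real.norm_eq_abs]
      _ ≤ ‖gradient f (x + t • v) - gradient f x‖ * ‖v‖ := abs_real_inner_le_norm _ _
      _ ≤ L * ‖t • v‖ * ‖v‖ := by
          gcongr
          simpa using hlip (x + t • v) x
      _ = L * t * ‖v‖ ^ 2 := by rw [norm_smul, Real.norm_of_nonneg ht]; ring
  have := image_norm_le_of_norm_deriv_right_le_deriv_boundary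
    (fun t _ => (hφ t).continuousAt.continuousWithinAt) (fun t _ => (hφ t).hasDerivWithinAt)
    (by simp) hB hbound (Set.right_mem_Icc.2 zero_le_one)
  simpa [v] using this

variable {Ω : Type*} {mΩ : MeasurableSpace Ω} {μ : Measure Ω} [IsProbabilityMeasure μ]

theorem integral_norm_sq_eq_norm_integral_sq_add {X : Ω → E} (hX : MemLp X 2 μ) :
    ∫ ω, ‖X ω‖ ^ 2 ∂μ = ‖∫ ω, X ω ∂μ‖ ^ 2 + ∫ ω, ‖X ω - ∫ ω, X ω ∂μ‖ ^ 2 ∂μ := by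
  set m := ∫ ω, X ω ∂μ
  have hint : Integrable X μ := hX.integrable one_le_two
  have hsq : Integrable (fun ω => ‖X ω‖ ^ 2) μ := (memLp_two_iff_integrable_sq_norm hX.1).1 hX
  have hexpand : ∀ ω, ‖X ω - m‖ ^ 2 = ‖X ω‖ ^ 2 - 2 * ⟪m, X ω⟫ + ‖m‖ ^ 2 := fun ω => by
    rw [norm_sub_sq_real, real_inner_comm]
  have hcross : Integrable (fun ω => 2 * ⟪m, X ω⟫) μ := (hint.const_inner m).const_mul 2
  have hdiff : Integrable (fun ω => ‖X ω‖ ^ 2 - 2 * ⟪m, X ω⟫) μ := hsq.sub hcross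
  simp_rw [hexpand]
  rw [integral_add hdiff (integrable_const _), integral_sub hsq hcross, integral_const_mul,
    integral_inner hint, real_inner_self_eq_norm_sq, integral_const]
  simp only [probReal_univ, smul_eq_mul, one_mul]
  ring

theorem integral_comp_add_le_of_gradient_lipschitz (hdiff : Differentiable ℝ f)
    (hlip : ∀ x y, ‖gradient f x - gradient f y‖ ≤ L * ‖x - y‖) (x : E) {Δ : Ω → E}
    (hΔ : MemLp Δ 2 μ) :
    ∫ ω, f (x + Δ ω) ∂μ ≤ f x + ⟪gradient f x, ∫ ω, Δ ω ∂μ⟫ + L / 2 * ∫ ω, ‖Δ ω‖ ^ 2 ∂μ := by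
  set g := gradient f x
  have hint : Integrable Δ μ := hΔ.integrable one_le_two
  have hsq : Integrable (fun ω => ‖Δ ω‖ ^ 2) μ := (memLp_two_iff_integrable_sq_norm hΔ.1).1 hΔ
  have hremainder : ∀ ω, |f (x + Δ ω) - f x - ⟪g, Δ ω⟫| ≤ L / 2 * ‖Δ ω‖ ^ 2 := fun ω => by
    simpa only [add_sub_cancel_left] using abs_sub_sub_inner_gradient_le hdiff hlip x (x + Δ ω)
  have hlinear : Integrable (fun ω => f x + ⟪g, Δ ω⟫) μ :=
    (integrable_const _).add (hint.const_inner g)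
  have hlower : Integrable (fun ω => f x + ⟪g, Δ ω⟫ - L / 2 * ‖Δ ω‖ ^ 2) μ :=
    hlinear.sub (hsq.const_mul _)
  have hupper : Integrable (fun ω => f x + ⟪g, Δ ω⟫ + L / 2 * ‖Δ ω‖ ^ 2) μ :=
    hlinear.add (hsq.const_mul _)
  have hcomp : Integrable (fun ω => f (x + Δ ω)) μ :=
    integrable_of_le_of_le (hdiff.continuous.comp_aestronglyMeasurable (hΔ.1.const_add x))
      (Filter.Eventually.of_forall fun ω => by linarith [(abs_le.1 (hremainder ω)).1])
      (Filter.Eventually.of_forall fun ω => by linarith [(abs_le.1 (hremainder ω)).2])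
      hlower hupper
  calc ∫ ω, f (x + Δ ω) ∂μ ≤ ∫ ω, f x + ⟪g, Δ ω⟫ + L / 2 * ‖Δ ω‖ ^ 2 ∂μ :=
        integral_mono hcomp hupper fun ω => by linarith [(abs_le.1 (hremainder ω)).2]
    _ = f x + ⟪g, ∫ ω, Δ ω ∂μ⟫ + L / 2 * ∫ ω, ‖Δ ω‖ ^ 2 ∂μ := by
        rw [integral_add hlinear (hsq.const_mul _), integral_add (integrable_const _)
          (hint.const_inner g), integral_inner hint, integral_const_mul, integral_const]
        simp only [probReal_univ, smul_eq_mul, one_mul]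

end Smooth

theorem cgd_one_step_descent_general {d : ℕ}
    (f : EuclideanSpace ℝ (Fin d) → ℝ) (L : ℝ)
    (hdiff : Differentiable ℝ f)
    (hlip : ∀ x y, ‖gradient f x - gradient f y‖ ≤ L * ‖x - y‖)
    (om η : ℝ)
    {Ω : Type*} [MeasureSpace Ω] [IsProbabilityMeasure (volume : Measure Ω)]
    (C : Ω → EuclideanSpace ℝ (Fin d) → EuclideanSpace ℝ (Fin d))
    (hCint : ∀ v, Integrable (fun ω => C ω v))
    (hCmean : ∀ v, (∫ ω, C ω v) = v)
    (hCsqint : ∀ v, Integrable (fun ω => ‖C ω v - v‖ ^ 2))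
    (hCvar : ∀ v, (∫ ω, ‖C ω v - v‖ ^ 2) ≤ om * ‖v‖ ^ 2)
    (xk : EuclideanSpace ℝ (Fin d)) (xnext : Ω → EuclideanSpace ℝ (Fin d))
    (hx : ∀ ω, xnext ω = xk - η • C ω (gradient f xk)) :
    (∫ ω, f (xnext ω))
      ≤ f xk - η * (1 - L * η * (1 + om) / 2) * ‖gradient f xk‖ ^ 2 := by
  -- in the zero space `hlip` holds even for negative `L`
  rcases subsingleton_or_nontrivial (EuclideanSpace ℝ (Fin d))
  · simp [Subsingleton.elim (gradient f xk) 0, Subsingleton.elim (xnext _) xk]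
  have hL : 0 ≤ L := nonneg_of_norm_sub_le_mul_norm_sub hlip
  set g := gradient f xk
  have hG : MemLp (fun ω => C ω g) 2 := by
    have hdev : MemLp (fun ω => C ω g - g) 2 :=
      (memLp_two_iff_integrable_sq_norm ((hCint g).1.sub aestronglyMeasurable_const)).2 (hCsqint g)
    simpa only [Pi.add_def, sub_add_cancel] using hdev.add (memLp_const g)
  have hsecond : ∫ ω, ‖C ω g‖ ^ 2 ≤ (1 + om) * ‖g‖ ^ 2 := by
    rw [integral_norm_sq_eq_norm_integral_sq_add hG, hCmean]
    linarith [hCvar g]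
  have hstep : ∀ ω, xnext ω = xk + (-η) • C ω g := fun ω => by
    rw [hx, neg_smul, sub_eq_add_neg]
  simp_rw [hstep]
  calc ∫ ω, f (xk + (-η) • C ω g)
      ≤ f xk + ⟪g, ∫ ω, (-η) • C ω g⟫ + L / 2 * ∫ ω, ‖(-η) • C ω g‖ ^ 2 :=
        integral_comp_add_le_of_gradient_lipschitz hdiff hlip xk (hG.const_smul (-η))
    _ = f xk - η * ‖g‖ ^ 2 + L / 2 * η ^ 2 * ∫ ω, ‖C ω g‖ ^ 2 := by
        simp_rw [integral_smul, hCmean, norm_smul, mul_pow, integral_const_mul]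
        rw [inner_smul_right, real_inner_self_eq_norm_sq, Real.norm_eq_abs, sq_abs]
        ring
    _ ≤ f xk - η * ‖g‖ ^ 2 + L / 2 * η ^ 2 * ((1 + om) * ‖g‖ ^ 2) := by gcongr
    _ = f xk - η * (1 - L * η * (1 + om) / 2) * ‖g‖ ^ 2 := by ring

theorem cgd_one_step_descent {d : ℕ}
    (f : EuclideanSpace ℝ (Fin d) → ℝ) (L : ℝ)
    (hdiff : Differentiable ℝ f)
    (hlip : ∀ x y, ‖gradient f x - gradient f y‖ ≤ L * ‖x - y‖)
    (om η : ℝ) (hom : 0 ≤ om) (hη : 0 < η)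
    {Ω : Type*} [MeasureSpace Ω] [IsProbabilityMeasure (volume : Measure Ω)]
    (C : Ω → EuclideanSpace ℝ (Fin d) → EuclideanSpace ℝ (Fin d))
    (hCint : ∀ v, Integrable (fun ω => C ω v))
    (hCmean : ∀ v, (∫ ω, C ω v) = v)
    (hCsqint : ∀ v, Integrable (fun ω => ‖C ω v - v‖ ^ 2))
    (hCvar : ∀ v, (∫ ω, ‖C ω v - v‖ ^ 2) ≤ om * ‖v‖ ^ 2)
    (xk : EuclideanSpace ℝ (Fin d)) (xnext : Ω → EuclideanSpace ℝ (Fin d))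
    (hx : ∀ ω, xnext ω = xk - η • C ω (gradient f xk)) :
    (∫ ω, f (xnext ω))
      ≤ f xk - η * (1 - L * η * (1 + om) / 2) * ‖gradient f xk‖ ^ 2 :=
  cgd_one_step_descent_general f L hdiff hlip om η C hCint hCmean hCsqint hCvar xk xnext hx
end

section
/- Let f : ℝ^d → ℝ be differentiable, let y^k, z^k ∈ ℝ^d, let η > 0, γ > 0, β, p ≠ 0, and θ = (1 − γ/p)/(1 − βγ/p) with βγ/p ≠ 1. Set x^k = θ y^k + (1 − θ) z^k, let g^k be a square-integrable random vector with E[g^k] = ∇f(x^k), and define y^{k+1} = x^k − (η/p) g^k and z^{k+1} = (1/γ) y^{k+1} + (1/p − 1/γ) y^k + (1 − 1/p)(1 − β) z^k + (1 − 1/p) β x^k. Then for every x ∈ ℝ^d: E[‖z^{k+1} − x‖²] = (1 − β)‖z^k − x‖² − β(1 − β)‖x^k − z^k‖² + β‖x^k − x‖² + (η²/(γ² p²)) E[‖g^k‖²] + (2η/γ²) ⟨∇f(x^k), (1 − γ/p)(y^k − x^k) + (γ/p)(x − x^k)⟩. -/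
/-!
The choice of `θ` is exactly what makes the coupling relation (with `s = γ/p`)
`(1 - βs) x^k = (1 - s) y^k + s(1 - β) z^k`
hold. It collapses `z^{k+1}` to `(1 - β) z^k + β x^k - (η/(γp)) g^k`, so expanding the square and
using `E[g^k] = ∇f(x^k)` leaves the convex-combination identity for `‖(1 - β) z^k + β x^k - x‖²`,
the second moment of `g^k`, and a cross term that the same relation rewrites into the stated one.
-/

open MeasureTheory RealInnerProductSpace

section InnerProductSpace

variable {E : Type*} [NormedAddCommGroup E] [InnerProductSpace ℝ E]

theorem norm_one_sub_smul_add_smul_sq (β : ℝ) (a b : E) :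
    ‖(1 - β) • a + β • b‖ ^ 2
      = (1 - β) * ‖a‖ ^ 2 - β * (1 - β) * ‖b - a‖ ^ 2 + β * ‖b‖ ^ 2 := by
  simp only [← real_inner_self_eq_norm_sq, inner_sub_left, inner_sub_right, inner_add_left,
    inner_add_right, real_inner_smul_left, real_inner_smul_right, real_inner_comm b a]
  ring

theorem integral_norm_sub_smul_sq [CompleteSpace E] {Ω : Type*} [MeasurableSpace Ω]
    {μ : Measure Ω} [IsProbabilityMeasure μ] {g : Ω → E} (hg : Integrable g μ)
    (hg2 : Integrable (fun ω => ‖g ω‖ ^ 2) μ) (a : E) (c : ℝ) :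
    ∫ ω, ‖a - c • g ω‖ ^ 2 ∂μ
      = ‖a‖ ^ 2 - 2 * c * ⟪a, ∫ ω, g ω ∂μ⟫ + c ^ 2 * ∫ ω, ‖g ω‖ ^ 2 ∂μ := by
  have hexpand : ∀ ω, ‖a - c • g ω‖ ^ 2 = ‖a‖ ^ 2 - 2 * c * ⟪a, g ω⟫ + c ^ 2 * ‖g ω‖ ^ 2 := by
    intro ω
    rw [norm_sub_sq_real, real_inner_smul_right, norm_smul, mul_pow, Real.norm_eq_abs, sq_abs]
    ring
  have hcross : Integrable (fun ω => 2 * c * ⟪a, g ω⟫) μ := (hg.const_inner a).const_mul _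
  have hbias : Integrable (fun ω => ‖a‖ ^ 2 - 2 * c * ⟪a, g ω⟫) μ :=
    (integrable_const _).sub hcross
  simp only [hexpand]
  rw [integral_add hbias (hg2.const_mul _),
    integral_sub (integrable_const _) hcross, integral_const_mul, integral_const_mul,
    integral_inner hg, integral_const, probReal_univ, one_smul]

end InnerProductSpace

section Coupling

variable {V : Type*} [AddCommGroup V] [Module ℝ V] {β s θ : ℝ} {x y z : V}

theorem one_sub_mul_smul_eq_of_coupling (hθ : θ * (1 - β * s) = 1 - s)
    (hx : x = θ • y + (1 - θ) • z) :
    (1 - β * s) • x = (1 - s) • y + (s * (1 - β)) • z := by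
  rw [hx]
  match_scalars
  · linear_combination hθ
  · linear_combination -hθ

theorem momentum_step_eq_of_coupling {γ p : ℝ} (hγ : γ ≠ 0)
    (h : (1 - β * (γ / p)) • x = (1 - γ / p) • y + (γ / p * (1 - β)) • z) :
    (1 / γ) • x + (1 / p - 1 / γ) • y + ((1 - 1 / p) * (1 - β)) • z + ((1 - 1 / p) * β) • x
      = (1 - β) • z + β • x := by
  linear_combination (norm := skip) (1 / γ) • h
  match_scalars <;> field_simp <;> ring

theorem gradient_direction_eq_of_coupling (w : V)
    (h : (1 - β * s) • x = (1 - s) • y + (s * (1 - β)) • z) :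
    (1 - s) • (y - x) + s • (w - x) = s • (w - ((1 - β) • z + β • x)) := by
  linear_combination (norm := module) -h

end Coupling

theorem acgd_z_recursion_identity_general {d : ℕ}
    (f : EuclideanSpace ℝ (Fin d) → ℝ)
    (yk zk : EuclideanSpace ℝ (Fin d))
    (η γ β p : ℝ) (hγ : 0 < γ)
    (hβγp : β * γ / p ≠ 1)
    (θ : ℝ) (hθ : θ = (1 - γ / p) / (1 - β * γ / p))
    (xk : EuclideanSpace ℝ (Fin d)) (hxk : xk = θ • yk + (1 - θ) • zk)
    {Ω : Type*} [MeasureSpace Ω] [IsProbabilityMeasure (volume : Measure Ω)]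
    (g : Ω → EuclideanSpace ℝ (Fin d))
    (hgint : Integrable g)
    (hgsq : Integrable (fun ω => ‖g ω‖ ^ 2))
    (hgmean : (∫ ω, g ω) = gradient f xk)
    (ynext znext : Ω → EuclideanSpace ℝ (Fin d))
    (hy : ∀ ω, ynext ω = xk - (η / p) • g ω)
    (hz : ∀ ω, znext ω = (1 / γ) • ynext ω + (1 / p - 1 / γ) • yk
        + ((1 - 1 / p) * (1 - β)) • zk + ((1 - 1 / p) * β) • xk)
    (x : EuclideanSpace ℝ (Fin d)) :
    (∫ ω, ‖znext ω - x‖ ^ 2)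
      = (1 - β) * ‖zk - x‖ ^ 2 - β * (1 - β) * ‖xk - zk‖ ^ 2 + β * ‖xk - x‖ ^ 2
        + η ^ 2 / (γ ^ 2 * p ^ 2) * (∫ ω, ‖g ω‖ ^ 2)
        + 2 * η / γ ^ 2
          * ⟪gradient f xk, (1 - γ / p) • (yk - xk) + (γ / p) • (x - xk)⟫ := by
  have hθ' : θ * (1 - β * (γ / p)) = 1 - γ / p := by
    rw [hθ, ← mul_div_assoc]
    exact div_mul_cancel₀ _ (sub_ne_zero.mpr hβγp.symm)
  have hcoupling := one_sub_mul_smul_eq_of_coupling hθ' hxk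
  set w := (1 - β) • zk + β • xk with hw
  have hstep : ∀ ω, znext ω - x = (w - x) - (η / (γ * p)) • g ω := by
    intro ω
    rw [hz ω, hy ω, hw]
    linear_combination (norm := module) momentum_step_eq_of_coupling hγ.ne' hcoupling
  have hdist : w - x = (1 - β) • (zk - x) + β • (xk - x) := by module
  simp only [hstep]
  rw [integral_norm_sub_smul_sq hgint hgsq, hgmean, hdist, norm_one_sub_smul_add_smul_sq,
    sub_sub_sub_cancel_right, gradient_direction_eq_of_coupling x hcoupling, ← hdist,
    real_inner_smul_right, real_inner_comm, ← neg_sub x w, inner_neg_right]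
  field_simp
  ring

theorem acgd_z_recursion_identity {d : ℕ}
    (f : EuclideanSpace ℝ (Fin d) → ℝ) (hdiff : Differentiable ℝ f)
    (yk zk : EuclideanSpace ℝ (Fin d))
    (η γ β p : ℝ) (hη : 0 < η) (hγ : 0 < γ) (hp : p ≠ 0)
    (hβγp : β * γ / p ≠ 1)
    (θ : ℝ) (hθ : θ = (1 - γ / p) / (1 - β * γ / p))
    (xk : EuclideanSpace ℝ (Fin d)) (hxk : xk = θ • yk + (1 - θ) • zk)
    {Ω : Type*} [MeasureSpace Ω] [IsProbabilityMeasure (volume : Measure Ω)]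
    (g : Ω → EuclideanSpace ℝ (Fin d))
    (hgint : Integrable g)
    (hgsq : Integrable (fun ω => ‖g ω‖ ^ 2))
    (hgmean : (∫ ω, g ω) = gradient f xk)
    (ynext znext : Ω → EuclideanSpace ℝ (Fin d))
    (hy : ∀ ω, ynext ω = xk - (η / p) • g ω)
    (hz : ∀ ω, znext ω = (1 / γ) • ynext ω + (1 / p - 1 / γ) • yk
        + ((1 - 1 / p) * (1 - β)) • zk + ((1 - 1 / p) * β) • xk)
    (x : EuclideanSpace ℝ (Fin d)) :
    (∫ ω, ‖znext ω - x‖ ^ 2)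
      = (1 - β) * ‖zk - x‖ ^ 2 - β * (1 - β) * ‖xk - zk‖ ^ 2 + β * ‖xk - x‖ ^ 2
        + η ^ 2 / (γ ^ 2 * p ^ 2) * (∫ ω, ‖g ω‖ ^ 2)
        + 2 * η / γ ^ 2
          * ⟪gradient f xk, (1 - γ / p) • (yk - xk) + (γ / p) • (x - xk)⟫ :=
  acgd_z_recursion_identity_general f yk zk η γ β p hγ hβγp θ hθ xk hxk g hgint hgsq hgmean ynext
    znext hy hz x
end

section
/- Let f_1, …, f_n : ℝ^d → ℝ be convex and differentiable with L-Lipschitz continuous gradients (L > 0), and let f = (1/n)∑_{i=1}^n f_i be μ-strongly convex (μ ≥ 0). Then for all x, y, u ∈ ℝ^d: f(y) ≤ f(u) + ⟨∇f(x), y − x⟩ − ⟨∇f(x), u − x⟩ + (L/2)‖y − x‖² − max{ (μ/2)‖u − x‖², (1/(2Ln)) ∑_{i=1}^n ‖∇f_i(u) − ∇f_i(x)‖² }. -/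
/-!
Write `D_g(x, y) = g y - g x - ⟪∇g x, y - x⟫` for the Bregman divergence. The claim says
`D_f(x, y) ≤ L/2 ‖y - x‖² + D_f(x, u) - max (μ/2 ‖u - x‖²) (…)`. The average `f` inherits the
`L`-Lipschitz gradient, so the descent lemma gives `D_f(x, y) ≤ L/2 ‖y - x‖²`. Strong convexity
is `μ/2 ‖u - x‖² ≤ D_f(x, u)`, and since `D_f` is the average of the `D_{f_i}`, cocoercivity
`‖∇f_i u - ∇f_i x‖² / (2L) ≤ D_{f_i}(x, u)` of each convex `L`-smooth `f_i` gives the other bound.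
-/

open RealInnerProductSpace Finset
open scoped Gradient

theorem norm_inv_card_smul_sum_le {E ι : Type*} [SeminormedAddCommGroup E] [NormedSpace ℝ E]
    (s : Finset ι) (v : ι → E) {C : ℝ} (hC : 0 ≤ C) (hv : ∀ i ∈ s, ‖v i‖ ≤ C) :
    ‖(#s : ℝ)⁻¹ • ∑ i ∈ s, v i‖ ≤ C := by
  rw [norm_smul, Real.norm_of_nonneg (by positivity)]
  calc (#s : ℝ)⁻¹ * ‖∑ i ∈ s, v i‖ ≤ (#s : ℝ)⁻¹ * (#s * C) := by
        gcongr
        exact (norm_sum_le _ _).trans (by simpa using sum_le_card_nsmul s _ C hv)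
    _ ≤ C := by
        rw [← mul_assoc]
        exact mul_le_of_le_one_left hC (inv_mul_le_one_of_le₀ le_rfl (by positivity))

section

variable {E : Type*} [NormedAddCommGroup E] [InnerProductSpace ℝ E] [CompleteSpace E]

theorem HasGradientAt.const_mul {f : E → ℝ} {f' x : E} (hf : HasGradientAt f f' x) (c : ℝ) :
    HasGradientAt (fun z => c * f z) (c • f') x := by
  rw [hasGradientAt_iff_hasFDerivAt, map_smul] at *
  exact hf.const_mul c

theorem HasGradientAt.fun_sum {ι : Type*} {s : Finset ι} {f : ι → E → ℝ} {f' : ι → E} {x : E}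
    (hf : ∀ i ∈ s, HasGradientAt (f i) (f' i) x) :
    HasGradientAt (fun z => ∑ i ∈ s, f i z) (∑ i ∈ s, f' i) x := by
  rw [hasGradientAt_iff_hasFDerivAt, map_sum]
  exact HasFDerivAt.fun_sum fun i hi => hasGradientAt_iff_hasFDerivAt.1 (hf i hi)

theorem hasDerivAt_comp_add_smul_s15 {g : E → ℝ} {x v : E} {t : ℝ}
    (hg : DifferentiableAt ℝ g (x + t • v)) :
    HasDerivAt (fun s : ℝ => g (x + s • v)) ⟪∇ g (x + t • v), v⟫ t := by
  have hline : HasDerivAt (fun s : ℝ => x + s • v) v t := by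
    simpa using ((hasDerivAt_id t).smul_const v).const_add x
  rw [inner_gradient_left]
  exact hg.hasFDerivAt.comp_hasDerivAt t hline

theorem ConvexOn.add_inner_gradient_le_s15 {g : E → ℝ} (hc : ConvexOn ℝ Set.univ g) {x : E}
    (hg : DifferentiableAt ℝ g x) (w : E) : g x + ⟪∇ g x, w - x⟫ ≤ g w := by
  have hline : ConvexOn ℝ Set.univ (fun s : ℝ => g (x + s • (w - x))) := by
    simpa [Function.comp_def, AffineMap.lineMap_apply, add_comm] using
      hc.comp_affineMap (AffineMap.lineMap x w : ℝ →ᵃ[ℝ] E)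
  have hslope := hline.le_slope_of_hasDerivAt (Set.mem_univ 0) (Set.mem_univ 1) one_pos
    (hasDerivAt_comp_add_smul_s15 (by simpa using hg))
  simp only [zero_smul, add_zero, slope_def_field, one_smul, add_sub_cancel, sub_zero,
    div_one] at hslope
  linarith

noncomputable def bregman (g : E → ℝ) (x y : E) : ℝ := g y - g x - ⟪∇ g x, y - x⟫

theorem bregman_le_of_lipschitz_gradient {g : E → ℝ} {L : ℝ} (hg : Differentiable ℝ g)
    (hlip : ∀ a b, ‖∇ g a - ∇ g b‖ ≤ L * ‖a - b‖) (x y : E) :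
    bregman g x y ≤ L / 2 * ‖y - x‖ ^ 2 := by
  set v := y - x
  let φ : ℝ → ℝ := fun s => g (x + s • v) - s * ⟪∇ g x, v⟫ - L / 2 * s ^ 2 * ‖v‖ ^ 2
  have hφ : ∀ s, HasDerivAt φ (⟪∇ g (x + s • v) - ∇ g x, v⟫ - L * s * ‖v‖ ^ 2) s := fun s => by
    refine (((hasDerivAt_comp_add_smul_s15 (hg _)).sub ((hasDerivAt_id s).mul_const _)).sub
      (((hasDerivAt_pow 2 s).const_mul (L / 2)).mul_const (‖v‖ ^ 2))).congr_deriv ?_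
    rw [inner_sub_left]
    simp only [Nat.cast_ofNat]
    ring
  have hφ' : ∀ s ∈ interior (Set.Ici (0 : ℝ)), deriv φ s ≤ 0 := fun s hs => by
    rw [interior_Ici, Set.mem_Ioi] at hs
    calc deriv φ s = ⟪∇ g (x + s • v) - ∇ g x, v⟫ - L * s * ‖v‖ ^ 2 := (hφ s).deriv
      _ ≤ ‖∇ g (x + s • v) - ∇ g x‖ * ‖v‖ - L * s * ‖v‖ ^ 2 := by
          gcongr; exact real_inner_le_norm _ _
      _ ≤ L * ‖s • v‖ * ‖v‖ - L * s * ‖v‖ ^ 2 := by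
          gcongr; simpa using hlip (x + s • v) x
      _ = 0 := by rw [norm_smul, Real.norm_of_nonneg hs.le]; ring
  have hanti : AntitoneOn φ (Set.Ici 0) :=
    antitoneOn_of_deriv_nonpos (convex_Ici 0) (HasDerivAt.continuousOn fun s _ => hφ s)
      (fun s _ => (hφ s).differentiableAt.differentiableWithinAt) hφ'
  have := hanti Set.self_mem_Ici (Set.mem_Ici.2 zero_le_one) zero_le_one
  simp only [φ, v, zero_smul, add_zero, one_smul, add_sub_cancel, zero_mul, sub_zero, one_mul,
    one_pow, ne_eq, OfNat.ofNat_ne_zero, not_false_eq_true, zero_pow, mul_zero] at this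
  unfold bregman
  linarith

theorem ConvexOn.sq_norm_gradient_sub_le_bregman {g : E → ℝ} {L : ℝ} (hc : ConvexOn ℝ Set.univ g)
    (hg : Differentiable ℝ g) (hL : 0 < L) (hlip : ∀ a b, ‖∇ g a - ∇ g b‖ ≤ L * ‖a - b‖)
    (x u : E) : 1 / (2 * L) * ‖∇ g u - ∇ g x‖ ^ 2 ≤ bregman g x u := by
  set v := ∇ g u - ∇ g x
  -- Squeeze `g w` between the tangent plane at `x` and the quadratic upper bound at `u`.
  set w := u - (1 / L) • v
  have hbelow := hc.add_inner_gradient_le_s15 (hg x) w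
  have habove := bregman_le_of_lipschitz_gradient hg hlip u w
  have hv : ⟪∇ g u, v⟫ - ⟪∇ g x, v⟫ = ‖v‖ ^ 2 := by
    rw [← inner_sub_left, real_inner_self_eq_norm_sq]
  have hwu : w - u = -((1 / L) • v) := by simp [w]
  have hwx : w - x = (u - x) - (1 / L) • v := by simp only [w]; abel
  rw [bregman, hwu, inner_neg_right, real_inner_smul_right, norm_neg, norm_smul,
    Real.norm_of_nonneg (by positivity)] at habove
  rw [hwx, inner_sub_right, real_inner_smul_right] at hbelow
  unfold bregman
  field_simp at hbelow habove ⊢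
  linarith

theorem bregman_const_mul_sum {ι : Type*} {s : Finset ι} {f : ι → E → ℝ} {x : E}
    (hf : ∀ i ∈ s, DifferentiableAt ℝ (f i) x) (c : ℝ) (y : E) :
    bregman (fun z => c * ∑ i ∈ s, f i z) x y = c * ∑ i ∈ s, bregman (f i) x y := by
  have hgrad := (HasGradientAt.fun_sum fun i hi => (hf i hi).hasGradientAt).const_mul c
  rw [bregman, hgrad.gradient, real_inner_smul_left, sum_inner]
  simp only [bregman, sum_sub_distrib]
  ring

end

theorem smooth_strongly_convex_mixed_bound_general {d n : ℕ}
    (L μ : ℝ) (hL : 0 < L)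
    (fi : Fin n → EuclideanSpace ℝ (Fin d) → ℝ)
    (hconv : ∀ i, ConvexOn ℝ Set.univ (fi i))
    (hdiff : ∀ i, Differentiable ℝ (fi i))
    (hlip : ∀ i x y, ‖gradient (fi i) x - gradient (fi i) y‖ ≤ L * ‖x - y‖)
    (f : EuclideanSpace ℝ (Fin d) → ℝ)
    (hf : ∀ x, f x = (1 / (n : ℝ)) * ∑ i, fi i x)
    (hsc : ∀ x y, μ / 2 * ‖x - y‖ ^ 2 ≤ f x - f y - ⟪gradient f y, x - y⟫)
    (x y u : EuclideanSpace ℝ (Fin d)) :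
    f y ≤ f u + ⟪gradient f x, y - x⟫ - ⟪gradient f x, u - x⟫
        + L / 2 * ‖y - x‖ ^ 2
        - max (μ / 2 * ‖u - x‖ ^ 2)
            (1 / (2 * L * n) * ∑ i, ‖gradient (fi i) u - gradient (fi i) x‖ ^ 2) := by
  have hfeq : f = fun z => (1 / (n : ℝ)) * ∑ i, fi i z := funext hf
  have hgrad (z) : ∇ f z = (1 / (n : ℝ)) • ∑ i, ∇ (fi i) z := by
    rw [hfeq]
    exact ((HasGradientAt.fun_sum fun i _ => (hdiff i z).hasGradientAt).const_mul _).gradient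
  have hsmooth (a b) : ‖∇ f a - ∇ f b‖ ≤ L * ‖a - b‖ := by
    rw [hgrad, hgrad, ← smul_sub, ← sum_sub_distrib]
    simpa using norm_inv_card_smul_sum_le univ _ (by positivity) fun i _ => hlip i a b
  have hcoco : 1 / (2 * L * n) * ∑ i, ‖∇ (fi i) u - ∇ (fi i) x‖ ^ 2 ≤ bregman f x u := by
    rw [hfeq, bregman_const_mul_sum (fun i _ => hdiff i x), mul_sum, mul_sum]
    refine sum_le_sum fun i _ => ?_
    calc 1 / (2 * L * n) * ‖∇ (fi i) u - ∇ (fi i) x‖ ^ 2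
        = 1 / n * (1 / (2 * L) * ‖∇ (fi i) u - ∇ (fi i) x‖ ^ 2) := by ring
      _ ≤ 1 / n * bregman (fi i) x u := by
        gcongr
        exact (hconv i).sq_norm_gradient_sub_le_bregman (hdiff i) hL (hlip i) x u
  have hdiff_f : Differentiable ℝ f :=
    hfeq ▸ (Differentiable.fun_sum fun i _ => hdiff i).const_mul _
  have hdescent := bregman_le_of_lipschitz_gradient hdiff_f hsmooth x y
  have hmax := max_le (hsc u x : μ / 2 * ‖u - x‖ ^ 2 ≤ bregman f x u) hcoco
  unfold bregman at hdescent hmax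
  linarith

theorem smooth_strongly_convex_mixed_bound {d n : ℕ} (hn : 0 < n)
    (L μ : ℝ) (hL : 0 < L) (hμ : 0 ≤ μ)
    (fi : Fin n → EuclideanSpace ℝ (Fin d) → ℝ)
    (hconv : ∀ i, ConvexOn ℝ Set.univ (fi i))
    (hdiff : ∀ i, Differentiable ℝ (fi i))
    (hlip : ∀ i x y, ‖gradient (fi i) x - gradient (fi i) y‖ ≤ L * ‖x - y‖)
    (f : EuclideanSpace ℝ (Fin d) → ℝ)
    (hf : ∀ x, f x = (1 / (n : ℝ)) * ∑ i, fi i x)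
    (hsc : ∀ x y, μ / 2 * ‖x - y‖ ^ 2 ≤ f x - f y - ⟪gradient f y, x - y⟫)
    (x y u : EuclideanSpace ℝ (Fin d)) :
    f y ≤ f u + ⟪gradient f x, y - x⟫ - ⟪gradient f x, u - x⟫
        + L / 2 * ‖y - x‖ ^ 2
        - max (μ / 2 * ‖u - x‖ ^ 2)
            (1 / (2 * L * n) * ∑ i, ‖gradient (fi i) u - gradient (fi i) x‖ ^ 2) :=
  smooth_strongly_convex_mixed_bound_general L μ hL fi hconv hdiff hlip f hf hsc x y u
end
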